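/- arXiv:math/0302002 — 4 statements merged into one kernel-verified Lean document; each statement's English description precedes it below -/
import Mathlib

section
/- Let H be a real Hilbert space, F : H → H Fréchet differentiable, and suppose ‖F'(x₁) − F'(x₂)‖ ≤ M₂‖x₁ − x₂‖ on U(r̃, x₀) with r̃ = 1/(2 M₂ m₁) and m₁ = ‖[F'(x₀)]⁻¹‖. Then for every h ∈ U(r̃, x₀): (F'(h)[F'(x₀)]⁻¹ F(h), F(h)) ≥ (1/2)‖F(h)‖², i.e. setting Φ(h) = −[F'(x₀)]⁻¹F(h) one has (F'(h)Φ(h), F(h)) ≤ −(1/2)‖F(h)‖². -/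
open RealInnerProductSpace

theorem ContinuousLinearEquiv.one_sub_mul_norm_sq_le_inner_apply_symm
    {E : Type*} [NormedAddCommGroup E] [InnerProductSpace ℝ E]
    (A : E ≃L[ℝ] E) (B : E →L[ℝ] E) {c : ℝ}
    (hB : ‖B - (A : E →L[ℝ] E)‖ * ‖(A.symm : E →L[ℝ] E)‖ ≤ c) (y : E) :
    (1 - c) * ‖y‖ ^ 2 ≤ ⟪B (A.symm y), y⟫ := by
  have hsplit : ⟪B (A.symm y), y⟫ = ‖y‖ ^ 2 + ⟪(B - (A : E →L[ℝ] E)) (A.symm y), y⟫ := by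
    rw [sub_apply, inner_sub_left, ContinuousLinearEquiv.coe_coe,
      A.apply_symm_apply, real_inner_self_eq_norm_sq]
    ring
  have hperturb : |⟪(B - (A : E →L[ℝ] E)) (A.symm y), y⟫| ≤ c * ‖y‖ ^ 2 :=
    calc |⟪(B - (A : E →L[ℝ] E)) (A.symm y), y⟫|
        ≤ ‖(B - (A : E →L[ℝ] E)) (A.symm y)‖ * ‖y‖ := abs_real_inner_le_norm _ _
      _ ≤ ‖B - (A : E →L[ℝ] E)‖ * (‖(A.symm : E →L[ℝ] E)‖ * ‖y‖) * ‖y‖ := by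
        gcongr
        exact (B - (A : E →L[ℝ] E)).le_opNorm_of_le ((A.symm : E →L[ℝ] E).le_opNorm y)
      _ = ‖B - (A : E →L[ℝ] E)‖ * ‖(A.symm : E →L[ℝ] E)‖ * ‖y‖ ^ 2 := by ring
      _ ≤ c * ‖y‖ ^ 2 := by gcongr
  linarith [(abs_le.mp hperturb).1]

theorem stmt3_general
    {H : Type*} [NormedAddCommGroup H] [InnerProductSpace ℝ H]
    (F : H → H) (F' : H → H →L[ℝ] H)
    (x₀ : H) (A : H ≃L[ℝ] H) (hA : (A : H →L[ℝ] H) = F' x₀)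
    (M₂ m₁ rtilde : ℝ) (hM₂ : 0 < M₂)
    (hm₁ : m₁ = ‖(A.symm : H →L[ℝ] H)‖)
    (hrtilde : rtilde = 1 / (2 * M₂ * m₁))
    (hLip : ∀ x₁ ∈ Metric.closedBall x₀ rtilde, ∀ x₂ ∈ Metric.closedBall x₀ rtilde,
      ‖F' x₁ - F' x₂‖ ≤ M₂ * ‖x₁ - x₂‖) :
    ∀ h ∈ Metric.closedBall x₀ rtilde,
      (1 / 2) * ‖F h‖ ^ 2 ≤ ⟪F' h (A.symm (F h)), F h⟫ ∧
      ⟪F' h (-(A.symm (F h))), F h⟫ ≤ -(1 / 2) * ‖F h‖ ^ 2 := by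
  intro h hh
  have hm₁0 : 0 ≤ m₁ := hm₁ ▸ norm_nonneg _
  have hx₀ : x₀ ∈ Metric.closedBall x₀ rtilde :=
    Metric.mem_closedBall_self (Metric.nonempty_closedBall.mp ⟨h, hh⟩)
  -- `M₂ m₁ / (2 M₂ m₁)` is `1/2`, or `0` when `m₁ = 0`
  have hsmall : M₂ * rtilde * m₁ ≤ 1 / 2 := by
    rw [hrtilde, show M₂ * (1 / (2 * M₂ * m₁)) * m₁ = (M₂ * m₁) / (M₂ * m₁) / 2 by ring]
    linarith [div_self_le_one (M₂ * m₁)]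
  have hclose : ‖F' h - (A : H →L[ℝ] H)‖ * ‖(A.symm : H →L[ℝ] H)‖ ≤ 1 / 2 :=
    calc ‖F' h - (A : H →L[ℝ] H)‖ * ‖(A.symm : H →L[ℝ] H)‖
        ≤ M₂ * ‖h - x₀‖ * m₁ := by
          rw [hA, ← hm₁]
          exact mul_le_mul_of_nonneg_right (hLip h hh x₀ hx₀) hm₁0
      _ ≤ M₂ * rtilde * m₁ := by
          gcongr
          exact mem_closedBall_iff_norm.mp hh
      _ ≤ 1 / 2 := hsmall
  have hcoercive := A.one_sub_mul_norm_sq_le_inner_apply_symm (F' h) hclose (F h)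
  refine ⟨by linarith, ?_⟩
  rw [map_neg, inner_neg_left]
  linarith

/-- the key coercivity estimate
(F'(h)[F'(x₀)]⁻¹F(h), F(h)) ≥ (1/2)‖F(h)‖² on the ball U(r̃,x₀). -/
theorem stmt3
    {H : Type*} [NormedAddCommGroup H] [InnerProductSpace ℝ H] [CompleteSpace H]
    (F : H → H) (F' : H → H →L[ℝ] H)
    (hF : ∀ x, HasFDerivAt F (F' x) x)
    (x₀ : H) (A : H ≃L[ℝ] H) (hA : (A : H →L[ℝ] H) = F' x₀)
    (M₂ m₁ rtilde : ℝ) (hM₂ : 0 < M₂)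
    (hm₁ : m₁ = ‖(A.symm : H →L[ℝ] H)‖)
    (hrtilde : rtilde = 1 / (2 * M₂ * m₁))
    (hLip : ∀ x₁ ∈ Metric.closedBall x₀ rtilde, ∀ x₂ ∈ Metric.closedBall x₀ rtilde,
      ‖F' x₁ - F' x₂‖ ≤ M₂ * ‖x₁ - x₂‖) :
    ∀ h ∈ Metric.closedBall x₀ rtilde,
      (1 / 2) * ‖F h‖ ^ 2 ≤ ⟪F' h (A.symm (F h)), F h⟫ ∧
      ⟪F' h (-(A.symm (F h))), F h⟫ ≤ -(1 / 2) * ‖F h‖ ^ 2 :=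
  stmt3_general F F' x₀ A hA M₂ m₁ rtilde hM₂ hm₁ hrtilde hLip
end

section
/- Under the hypotheses of the inversion-free continuous Newton theorem (with constants M₁, M₂, c, γ, σ, ‖F(x₀)‖ as there), the discrepancy operator W(t) = F'(x(t))B(t) − I satisfies: if c = γ, ‖W(t)‖ ≤ (M₂‖F(x₀)‖σ² t + ‖F'(x₀)B₀ − I‖) e^{−ct}; and if c ≠ γ, ‖W(t)‖ ≤ (M₂‖F(x₀)‖σ²/|c − γ| + ‖F'(x₀)B₀ − I‖) e^{−min{γ,c} t}. -/
open RealInnerProductSpace Set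

lemma int_exp (a T : ℝ) (ha : a ≠ 0) :
    ∫ s in (0:ℝ)..T, Real.exp (a*s) = (Real.exp (a*T) - 1)/a := by
  have hD : ∀ s : ℝ, HasDerivAt (fun u => Real.exp (a*u)/a) (Real.exp (a*s)) s := by
    intro s
    have h := (((hasDerivAt_id s).const_mul a).exp).div_const a
    simpa [mul_comm, mul_div_assoc, mul_div_cancel_left₀ _ ha] using h
  rw [intervalIntegral.integral_eq_sub_of_hasDerivAt (fun s _ => hD s)
    ((Real.continuous_exp.comp (continuous_const.mul continuous_id)).intervalIntegrable 0 T)]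
  field_simp
  simp

lemma gron {H : Type*} [NormedAddCommGroup H] [InnerProductSpace ℝ H]
    (g : ℝ → ℝ) (hgc : Continuous g) (hg0 : ∀ t, 0 ≤ g t)
    (v vd : ℝ → H) (hd : ∀ t ∈ Ici (0:ℝ), HasDerivAt v (vd t) t)
    (hle : ∀ t ∈ Ici (0:ℝ), ⟪vd t, v t⟫ ≤ g t * ‖v t‖) :
    ∀ T ∈ Ici (0:ℝ), ‖v T‖ ≤ ‖v 0‖ + ∫ s in (0:ℝ)..T, g s := by
  intro T hT
  have hT0 : (0:ℝ) ≤ T := hT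
  set φ : ℝ → ℝ := fun t => ‖v 0‖ + ∫ s in (0:ℝ)..t, g s with hφ
  have hφd : ∀ t : ℝ, HasDerivAt φ (g t) t := fun t =>
    ((intervalIntegral.integral_hasDerivAt_right (hgc.intervalIntegrable 0 t)
      (hgc.stronglyMeasurableAtFilter _ _) hgc.continuousAt).const_add _)
  have hφ0 : ∀ t ∈ Icc (0:ℝ) T, 0 ≤ φ t := by
    intro t ht
    have : 0 ≤ ∫ s in (0:ℝ)..t, g s :=
      intervalIntegral.integral_nonneg ht.1 (fun u _ => hg0 u)
    have := norm_nonneg (v 0); simp only [hφ]; linarith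
  suffices key : ∀ ε : ℝ, 0 < ε → ‖v T‖ ≤ φ T + ε * (1 + T) by
    by_contra hcon
    push_neg at hcon
    have h1T : (0:ℝ) < 1 + T := by linarith
    have hδ : 0 < (‖v T‖ - φ T) / 2 := by linarith
    have hδpos : 0 < (‖v T‖ - φ T) / (2 * (1 + T)) :=
      div_pos (by simp only [hφ]; linarith) (by positivity)
    have := key ((‖v T‖ - φ T) / (2 * (1 + T))) hδpos
    rw [div_mul_eq_mul_div, mul_comm (2:ℝ) (1+T), ← div_div,
      mul_div_cancel_right₀ _ (ne_of_gt h1T)] at this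
    linarith
  intro ε hε
  set ψ : ℝ → ℝ := fun t => φ t + ε * (1 + t) with hψ
  have hψd : ∀ t : ℝ, HasDerivAt ψ (g t + ε) t := by
    intro t
    have h2 : HasDerivAt (fun t : ℝ => ε * (1 + t)) (ε * (0 + 1)) t :=
      ((hasDerivAt_const t (1:ℝ)).add (hasDerivAt_id t)).const_mul ε
    have := (hφd t).add h2
    simp at this
    exact this
  have hψpos : ∀ t ∈ Icc (0:ℝ) T, 0 < ψ t := by
    intro t ht
    have h1 := hφ0 t ht
    have h2 : (0:ℝ) ≤ t := ht.1
    simp only [hψ]; nlinarith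
  set f : ℝ → ℝ := fun t => ⟪v t, v t⟫ with hf
  set fd : ℝ → ℝ := fun t => 2 * ⟪vd t, v t⟫ with hfd
  have hfD : ∀ t ∈ Ico (0:ℝ) T, HasDerivWithinAt f (fd t) (Ici t) t := by
    intro t ht
    have h := (hd t ht.1).inner ℝ (hd t ht.1)
    have : HasDerivAt f (2 * ⟪vd t, v t⟫) t := by
      exact h.congr_deriv (by rw [real_inner_comm (v t) (vd t)]; ring)
    exact this.hasDerivWithinAt
  set Bf : ℝ → ℝ := fun t => ψ t ^ 2 with hBf
  set Bd : ℝ → ℝ := fun t => 2 * ψ t * (g t + ε) with hBd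
  have hBD : ∀ t ∈ Ico (0:ℝ) T, HasDerivWithinAt Bf (Bd t) (Ici t) t := by
    intro t _
    have := ((hψd t).pow 2).hasDerivWithinAt (s := Ici t)
    simp [hBd, mul_comm, mul_assoc, mul_left_comm] at this ⊢
    exact this
  have hfc : ContinuousOn f (Icc (0:ℝ) T) := fun t ht =>
    (((hd t ht.1).inner ℝ (hd t ht.1)).continuousAt.congr
      (by filter_upwards with z; rfl)).continuousWithinAt
  have hBc : ContinuousOn Bf (Icc (0:ℝ) T) := fun t _ =>
    (((hψd t).pow 2).continuousAt).continuousWithinAt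
  have ha : f 0 ≤ Bf 0 := by
    have h0 : φ 0 = ‖v 0‖ := by simp [hφ]
    simp only [hf, hBf, hψ, real_inner_self_eq_norm_sq, h0]
    nlinarith [norm_nonneg (v 0)]
  have bound : ∀ t ∈ Ico (0:ℝ) T, f t = Bf t → fd t < Bd t := by
    intro t ht heq
    have htI : t ∈ Icc (0:ℝ) T := ⟨ht.1, ht.2.le⟩
    have hψt := hψpos t htI
    have hv : ‖v t‖ = ψ t := by
      have h1 : ‖v t‖ ^ 2 = ψ t ^ 2 := by
        rw [← real_inner_self_eq_norm_sq]; exact heq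
      nlinarith [norm_nonneg (v t)]
    have h2 := hle t ht.1
    simp only [hfd, hBd, hv] at h2 ⊢
    nlinarith [hg0 t]
  have := image_le_of_deriv_right_lt_deriv_boundary' hfc hfD ha hBc hBD bound
    (Set.right_mem_Icc.mpr hT0)
  have hfT : ‖v T‖ ^ 2 ≤ ψ T ^ 2 := by
    rw [← real_inner_self_eq_norm_sq]; exact this
  have hψT := hψpos T (Set.right_mem_Icc.mpr hT0)
  have : ‖v T‖ ≤ ψ T := by nlinarith [norm_nonneg (v T)]
  simpa [hψ, hφ] using this
set_option maxHeartbeats 1000000 in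
/-- decay rates for the discrepancy W(t) = F'(x(t))B(t) − I in the
inversion-free continuous Newton scheme. -/
theorem stmt11
    {H : Type*} [NormedAddCommGroup H] [InnerProductSpace ℝ H] [CompleteSpace H]
    (F : H → H) (F' : H → H →L[ℝ] H) (F'' : H → H →L[ℝ] H →L[ℝ] H)
    (x : ℝ → H) (B : ℝ → H →L[ℝ] H) (W : ℝ → H →L[ℝ] H)
    (M₂ c γ σ : ℝ) (hc : 0 < c) (hγ : 0 < γ)
    (hWdef : ∀ t, W t = (F' (x t)).comp (B t) - 1)
    (hWode : ∀ t ∈ Set.Ici (0 : ℝ), HasDerivAt W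
      (-(((F'' (x t)) ((B t) (F (x t)))).comp (B t)) -
        ((F' (x t)).comp (ContinuousLinearMap.adjoint (F' (x t)))).comp (W t)) t)
    (hcoer : ∀ t ∈ Set.Ici (0 : ℝ), ∀ h : H,
      c * ‖h‖ ^ 2 ≤ ⟪(F' (x t)) (ContinuousLinearMap.adjoint (F' (x t)) h), h⟫)
    (hF'' : ∀ t ∈ Set.Ici (0 : ℝ), ‖F'' (x t)‖ ≤ M₂)
    (hB : ∀ t ∈ Set.Ici (0 : ℝ), ‖B t‖ ≤ σ)
    (hFdecay : ∀ t ∈ Set.Ici (0 : ℝ), ‖F (x t)‖ ≤ ‖F (x 0)‖ * Real.exp (-γ * t)) :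
    (c = γ → ∀ t ∈ Set.Ici (0 : ℝ),
      ‖W t‖ ≤ (M₂ * ‖F (x 0)‖ * σ ^ 2 * t + ‖(F' (x 0)).comp (B 0) - 1‖) * Real.exp (-c * t)) ∧
    (c ≠ γ → ∀ t ∈ Set.Ici (0 : ℝ),
      ‖W t‖ ≤ (M₂ * ‖F (x 0)‖ * σ ^ 2 / |c - γ| + ‖(F' (x 0)).comp (B 0) - 1‖) *
        Real.exp (-(min γ c) * t)) := by
  have h0 : (0:ℝ) ∈ Set.Ici (0:ℝ) := Set.mem_Ici.mpr le_rfl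
  have hσ0 : 0 ≤ σ := (norm_nonneg (B 0)).trans (hB 0 h0)
  have hM0 : 0 ≤ M₂ := le_trans (ContinuousLinearMap.opNorm_nonneg (F'' (x 0))) (hF'' 0 h0)
  set K0 : ℝ := M₂ * ‖F (x 0)‖ * σ ^ 2 with hK0
  have hK0n : 0 ≤ K0 := by positivity
  set N0 : ℝ := ‖(F' (x 0)).comp (B 0) - 1‖ with hN0
  have hN0n : 0 ≤ N0 := norm_nonneg _
  set Wd : ℝ → H →L[ℝ] H := fun t =>
    -(((F'' (x t)) ((B t) (F (x t)))).comp (B t)) -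
      ((F' (x t)).comp (ContinuousLinearMap.adjoint (F' (x t)))).comp (W t) with hWd
  -- master estimate
  have master : ∀ (hh : H), ∀ T ∈ Set.Ici (0:ℝ),
      Real.exp (c*T) * ‖(W T) hh‖ ≤
        ‖(W 0) hh‖ + (K0 * ‖hh‖) * ∫ s in (0:ℝ)..T, Real.exp ((c-γ)*s) := by
    intro hh T hT
    set v : ℝ → H := fun t => Real.exp (c*t) • (W t) hh with hv
    set vd : ℝ → H := fun t =>
      (Real.exp (c*t) * c) • (W t) hh + Real.exp (c*t) • ((Wd t) hh) with hvd
    set g : ℝ → ℝ := fun t => (K0 * ‖hh‖) * Real.exp ((c-γ)*t) with hg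
    have hgc : Continuous g := by
      apply continuous_const.mul
      exact Real.continuous_exp.comp (continuous_const.mul continuous_id)
    have hg0 : ∀ t, 0 ≤ g t := fun t => by positivity
    have hd : ∀ t ∈ Ici (0:ℝ), HasDerivAt v (vd t) t := by
      intro t ht
      have hWh : HasDerivAt (fun t => (W t) hh) ((Wd t) hh) t := by
        have := (hWode t ht).clm_apply (hasDerivAt_const t hh)
        simp only [map_zero, add_zero] at this
        exact this
      have hexp : HasDerivAt (fun t => Real.exp (c*t)) (Real.exp (c*t) * c) t := by
        simpa [mul_comm] using ((hasDerivAt_id t).const_mul c).exp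
      simp only [hv, hvd]
      exact (hexp.smul hWh).congr_deriv (add_comm _ _)
    have hle : ∀ t ∈ Ici (0:ℝ), ⟪vd t, v t⟫ ≤ g t * ‖v t‖ := by
      intro t ht
      set e := Real.exp (c*t) with he
      have hepos : 0 < e := Real.exp_pos _
      set w := (W t) hh with hw
      set Gv := (((F'' (x t)) ((B t) (F (x t)))).comp (B t)) hh with hGv
      -- bound on ‖Gv‖
      have hBt := hB t ht
      have hFt := hFdecay t ht
      have hF2 := hF'' t ht
      have he1 : ‖(B t) (F (x t))‖ ≤ σ * (‖F (x 0)‖ * Real.exp (-γ*t)) :=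
        ((B t).le_opNorm _).trans
          (mul_le_mul hBt hFt (norm_nonneg _) hσ0)
      have he2 : ‖(F'' (x t)) ((B t) (F (x t)))‖ ≤
          M₂ * (σ * (‖F (x 0)‖ * Real.exp (-γ*t))) :=
        ((F'' (x t)).le_opNorm _).trans
          (mul_le_mul hF2 he1 (norm_nonneg _) hM0)
      have he3 : ‖(B t) hh‖ ≤ σ * ‖hh‖ :=
        ((B t).le_opNorm hh).trans (mul_le_mul_of_nonneg_right hBt (norm_nonneg _))
      have hG : ‖Gv‖ ≤ (K0 * ‖hh‖) * Real.exp (-γ*t) := by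
        have : ‖Gv‖ ≤ (M₂ * (σ * (‖F (x 0)‖ * Real.exp (-γ*t)))) * (σ * ‖hh‖) := by
          rw [hGv, ContinuousLinearMap.comp_apply]
          exact (((F'' (x t)) ((B t) (F (x t)))).le_opNorm _).trans
            (mul_le_mul he2 he3 (norm_nonneg _) (by positivity))
        calc ‖Gv‖ ≤ _ := this
          _ = (K0 * ‖hh‖) * Real.exp (-γ*t) := by rw [hK0]; ring
      -- the inner product computation
      have hWdh : (Wd t) hh = -Gv - (F' (x t))
          ((ContinuousLinearMap.adjoint (F' (x t))) w) := by
        simp [hWd, hGv, hw, ContinuousLinearMap.sub_apply, ContinuousLinearMap.neg_apply,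
          ContinuousLinearMap.comp_apply]
      have hinner : ⟪vd t, v t⟫ =
          e*e*(c*⟪w,w⟫ - ⟪Gv, w⟫ -
            ⟪(F' (x t)) ((ContinuousLinearMap.adjoint (F' (x t))) w), w⟫) := by
        simp only [hvd, hv, ← he, ← hw, hWdh, inner_add_left, inner_sub_left,
          inner_neg_left, real_inner_smul_left, real_inner_smul_right]
        ring
      have hcw := hcoer t ht w
      have habs := (abs_le.1 (abs_real_inner_le_norm Gv w)).1
      have hX : c*⟪w,w⟫ - ⟪Gv, w⟫ -
          ⟪(F' (x t)) ((ContinuousLinearMap.adjoint (F' (x t))) w), w⟫ ≤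
          ((K0 * ‖hh‖) * Real.exp (-γ*t)) * ‖w‖ := by
        have h4 : ‖Gv‖*‖w‖ ≤ ((K0 * ‖hh‖) * Real.exp (-γ*t))*‖w‖ :=
          mul_le_mul_of_nonneg_right hG (norm_nonneg w)
        have h5 : ⟪w,w⟫ = ‖w‖^2 := real_inner_self_eq_norm_sq w
        rw [h5]
        nlinarith [norm_nonneg Gv, norm_nonneg w]
      have hnv : ‖v t‖ = e * ‖w‖ := by
        rw [hv]; simp only [← he, ← hw]
        rw [norm_smul, Real.norm_eq_abs, abs_of_pos hepos]
      have hsplit : Real.exp ((c-γ)*t) = e * Real.exp (-γ*t) := by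
        rw [he, ← Real.exp_add]; ring_nf
      have hgval : g t = K0 * ‖hh‖ * (e * Real.exp (-γ*t)) := by
        simp only [hg]; rw [hsplit]
      rw [hinner, hnv, hgval]
      calc e*e*(c*⟪w,w⟫ - ⟪Gv, w⟫ -
            ⟪(F' (x t)) ((ContinuousLinearMap.adjoint (F' (x t))) w), w⟫)
          ≤ e*e*(((K0 * ‖hh‖) * Real.exp (-γ*t)) * ‖w‖) :=
            mul_le_mul_of_nonneg_left hX (by positivity)
        _ = K0 * ‖hh‖ * (e * Real.exp (-γ * t)) * (e * ‖w‖) := by ring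
    have hmain := gron g hgc hg0 v vd hd hle T hT
    have hv0 : ‖v 0‖ = ‖(W 0) hh‖ := by simp [hv]
    have hvT : ‖v T‖ = Real.exp (c*T) * ‖(W T) hh‖ := by
      rw [hv]; rw [norm_smul, Real.norm_eq_abs, abs_of_pos (Real.exp_pos _)]
    have hint : (∫ s in (0:ℝ)..T, g s) =
        (K0 * ‖hh‖) * ∫ s in (0:ℝ)..T, Real.exp ((c-γ)*s) := by
      rw [hg]; exact intervalIntegral.integral_const_mul _ _
    rw [hvT, hv0, hint] at hmain
    exact hmain
  have hW0 : ∀ hh : H, ‖(W 0) hh‖ ≤ N0 * ‖hh‖ := by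
    intro hh
    have h1 := ((F' (x 0)).comp (B 0) - 1).le_opNorm hh
    rw [hWdef 0]
    exact h1
  clear_value K0 N0
  clear hWd Wd hWode hcoer hF'' hB hFdecay
  constructor
  · -- case c = γ
    intro hcγ T hT
    have hT0 : (0:ℝ) ≤ T := hT
    apply ContinuousLinearMap.opNorm_le_bound _ (by positivity)
    intro hh
    have hm := master hh T hT
    have hE : (0:ℝ) < Real.exp (c*T) := Real.exp_pos _
    have hint : (∫ s in (0:ℝ)..T, Real.exp ((c-γ)*s)) = T := by
      rw [hcγ]; simp
    rw [hint] at hm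
    have hWh := hW0 hh
    have hexp : Real.exp (-c*T) = (Real.exp (c*T))⁻¹ := by
      rw [← Real.exp_neg]; ring_nf
    rw [hexp]
    have hgoal : ‖(W T) hh‖ ≤ ((K0 * T + N0) * ‖hh‖) / Real.exp (c*T) := by
      rw [le_div_iff₀ hE]
      nlinarith [norm_nonneg hh]
    calc ‖(W T) hh‖ ≤ ((K0 * T + N0) * ‖hh‖) / Real.exp (c*T) := hgoal
      _ = (K0 * T + N0) * (Real.exp (c*T))⁻¹ * ‖hh‖ := by
          rw [div_eq_mul_inv]; ring
  · -- case c ≠ γ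
    intro hcγ T hT
    have hT0 : (0:ℝ) ≤ T := hT
    have ha : c - γ ≠ 0 := sub_ne_zero.2 hcγ
    have hamem : 0 < |c - γ| := abs_pos.2 ha
    apply ContinuousLinearMap.opNorm_le_bound _ (by positivity)
    intro hh
    have hm := master hh T hT
    have hE : (0:ℝ) < Real.exp (c*T) := Real.exp_pos _
    rw [int_exp _ _ ha] at hm
    have hWh := hW0 hh
    have hmc : min γ c ≤ c := min_le_right _ _
    have hEm : Real.exp (-(min γ c)*T) * Real.exp (c*T) = Real.exp ((c-(min γ c))*T) := by
      rw [← Real.exp_add]; ring_nf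
    have hEmc : (1:ℝ) ≤ Real.exp ((c-(min γ c))*T) := by
      rw [← Real.exp_zero]
      exact Real.exp_le_exp.2 (mul_nonneg (by linarith) hT0)
    -- key integral bound: exp(c*T) appears; show
    -- K0*‖hh‖*((exp((c-γ)T) - 1)/(c-γ)) ≤ (K0/|c-γ|) * ‖hh‖ * exp((c-(min γ c))*T)
    have hintb : (Real.exp ((c-γ)*T) - 1)/(c-γ) ≤ Real.exp ((c-(min γ c))*T) / |c-γ| := by
      rcases lt_or_gt_of_ne (sub_ne_zero.2 hcγ) with hlt | hgt
      · -- c - γ < 0, so c < γ, m = c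
        have hmc' : min γ c = c := min_eq_right (by linarith)
        have h1 : Real.exp ((c-γ)*T) - 1 ≤ 0 := by
          have : (c-γ)*T ≤ 0 := mul_nonpos_of_nonpos_of_nonneg (le_of_lt hlt) hT0
          have := Real.exp_le_one_iff.2 this
          linarith
        have habs : |c - γ| = -(c-γ) := abs_of_neg hlt
        have hb : (0:ℝ) < γ - c := by linarith
        have heq : (Real.exp ((c-γ)*T) - 1)/(c-γ) =
            (1 - Real.exp ((c-γ)*T))/(γ-c) := by
          rw [div_eq_div_iff (by linarith) (by linarith)]; ring
        rw [habs, hmc', sub_self, zero_mul, Real.exp_zero, heq, neg_sub]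
        exact (div_le_div_iff_of_pos_right hb).2 (by linarith [(Real.exp_pos ((c-γ)*T)).le])
      · -- c - γ > 0, so γ < c, m = γ
        have hmc' : min γ c = γ := min_eq_left (by linarith)
        have habs : |c - γ| = c - γ := abs_of_pos hgt
        rw [habs, hmc']
        exact (div_le_div_iff_of_pos_right hgt).2 (by linarith)
    -- now combine
    have hb1 : ‖(W T) hh‖ * Real.exp (c*T) ≤
        (K0/|c-γ| + N0) * Real.exp ((c-(min γ c))*T) * ‖hh‖ := by
      have h2 : (K0 * ‖hh‖) * ((Real.exp ((c-γ)*T) - 1)/(c-γ)) ≤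
          (K0 * ‖hh‖) * (Real.exp ((c-(min γ c))*T) / |c-γ|) :=
        mul_le_mul_of_nonneg_left hintb (mul_nonneg hK0n (norm_nonneg hh))
      have h3 : ‖(W 0) hh‖ ≤ N0 * Real.exp ((c-(min γ c))*T) * ‖hh‖ := by
        calc ‖(W 0) hh‖ ≤ N0 * ‖hh‖ := hWh
          _ ≤ N0 * Real.exp ((c-(min γ c))*T) * ‖hh‖ := by
            have h4 := mul_le_mul_of_nonneg_right
              (mul_le_mul_of_nonneg_left hEmc hN0n) (norm_nonneg hh)
            simpa using h4
      calc ‖(W T) hh‖ * Real.exp (c*T) = Real.exp (c*T) * ‖(W T) hh‖ := by ring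
        _ ≤ ‖(W 0) hh‖ + (K0 * ‖hh‖) * ((Real.exp ((c-γ)*T) - 1)/(c-γ)) := hm
        _ ≤ N0 * Real.exp ((c-(min γ c))*T) * ‖hh‖ + (K0 * ‖hh‖) * (Real.exp ((c-(min γ c))*T) / |c-γ|) := by
            linarith
        _ = (K0/|c-γ| + N0) * Real.exp ((c-(min γ c))*T) * ‖hh‖ := by
            simp only [div_eq_mul_inv]; ring
    have hfin : ‖(W T) hh‖ ≤ (K0/|c-γ| + N0) * Real.exp (-(min γ c)*T) * ‖hh‖ := by
      rw [← mul_le_mul_iff_of_pos_right hE]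
      calc ‖(W T) hh‖ * Real.exp (c*T) ≤ (K0/|c-γ| + N0) * Real.exp ((c-(min γ c))*T) * ‖hh‖ := hb1
        _ = (K0/|c-γ| + N0) * Real.exp (-(min γ c)*T) * ‖hh‖ * Real.exp (c*T) := by
            rw [← hEm]; ring
    exact hfin
end

section
/- Let H be a real Hilbert space, F : H → H Fréchet differentiable with F(x̂) = 0, and suppose: (1) ε ∈ C¹[0,∞), ε(t) > 0 decreases monotonically to 0, ε̇/ε is nondecreasing, and ε(0) > |ε̇(0)|; (2) ‖F'(x₁) − F'(x₂)‖ ≤ M₂‖x₁ − x₂‖ and F'(x) = F'(x₀)G(x₀,x) with ‖G(x₀,x) − I‖ ≤ C(G)‖x₀ − x‖ on the ball U(ρ, x̂), ρ = (ε(0) − |ε̇(0)|)/(M₂ + C(G)ε(0)); (3) (F'(x₀)h, h) ≥ 0 for all h ∈ H and ‖x₀ − x̂‖ < ρ; (4) there exists v ∈ H with x̂ − x₀ = F'(x₀)v and ε(0) − |ε̇(0)| ≥ [M₂ + C(G)ε(0)]ε(0)√(2‖v‖/M₂). Then the regularized flow ẋ(t) = −[F'(x₀) + ε(t)I]⁻¹(F(x(t))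 + ε(t)(x(t) − x₀)), x(0) = x₀, has a unique solution on [0,∞) and ‖x(t) − x̂‖ ≤ [(ε(0) − |ε̇(0)|)/(ε(0)[M₂ + C(G)ε(0)])] · ε(t) for all t ≥ 0. -/
open RealInnerProductSpace Set Metric Filter Topology

noncomputable section Stmt16Aux

variable {H : Type*} [NormedAddCommGroup H] [InnerProductSpace ℝ H]

lemma stmt16_res_apply (A R : H →L[ℝ] H) (e : ℝ)
    (h : (A + e • (1 : H →L[ℝ] H)).comp R = 1) (w : H) :
    A (R w) + e • (R w) = w := by
  have := DFunLike.congr_fun h w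
  simpa [ContinuousLinearMap.comp_apply, ContinuousLinearMap.add_apply,
    ContinuousLinearMap.smul_apply, ContinuousLinearMap.one_apply] using this

lemma stmt16_res_left (A R : H →L[ℝ] H) (e : ℝ)
    (h : R.comp (A + e • (1 : H →L[ℝ] H)) = 1) (u : H) :
    R (A u + e • u) = u := by
  have := DFunLike.congr_fun h u
  simpa [ContinuousLinearMap.comp_apply, ContinuousLinearMap.add_apply,
    ContinuousLinearMap.smul_apply, ContinuousLinearMap.one_apply] using this

lemma stmt16_rinv_norm (A R : H →L[ℝ] H) (e : ℝ) (he : 0 < e)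
    (hmono : ∀ h : H, 0 ≤ ⟪A h, h⟫)
    (h : (A + e • (1 : H →L[ℝ] H)).comp R = 1) (w : H) :
    ‖R w‖ ≤ ‖w‖ / e := by
  set z := R w with hz
  have hzw : A z + e • z = w := stmt16_res_apply A R e h w
  have h1 : 0 ≤ ⟪A z, z⟫ := hmono z
  have h2 : ⟪w, z⟫ = ⟪A z, z⟫ + e * ‖z‖ ^ 2 := by
    rw [← hzw, inner_add_left, real_inner_smul_left, real_inner_self_eq_norm_sq]
  have h3 : ⟪w, z⟫ ≤ ‖w‖ * ‖z‖ := real_inner_le_norm w z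
  rcases eq_or_lt_of_le (norm_nonneg z) with h0 | h0
  · rw [← h0]; positivity
  · rw [le_div_iff₀ he]
    nlinarith [h0]

lemma stmt16_rinvA_norm (A R : H →L[ℝ] H) (e : ℝ) (he : 0 < e)
    (hmono : ∀ h : H, 0 ≤ ⟪A h, h⟫)
    (h : (A + e • (1 : H →L[ℝ] H)).comp R = 1) (u : H) :
    ‖R (A u)‖ ≤ ‖u‖ := by
  set z := R (A u) with hz
  have hzw : A z + e • z = A u := stmt16_res_apply A R e h (A u)
  have h1 : 0 ≤ ⟪A (z - u), z - u⟫ := hmono (z - u)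
  have h2 : A (z - u) = -(e • z) := by
    rw [map_sub]; rw [← hzw]; abel
  have h3 : (0:ℝ) ≤ -(e * (‖z‖ ^ 2 - ⟪z, u⟫)) := by
    have : ⟪A (z - u), z - u⟫ = -(e * (‖z‖ ^ 2 - ⟪z, u⟫)) := by
      rw [h2, inner_neg_left, real_inner_smul_left, inner_sub_right,
        real_inner_self_eq_norm_sq]
    linarith [this ▸ h1]
  have h4 : ‖z‖ ^ 2 ≤ ⟪z, u⟫ := by nlinarith
  have h5 : ⟪z, u⟫ ≤ ‖z‖ * ‖u‖ := real_inner_le_norm z u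
  rcases eq_or_lt_of_le (norm_nonneg z) with h0 | h0
  · rw [← h0]; exact norm_nonneg u
  · nlinarith


-- derivative of antitone C¹ function is ≤ 0 at the left endpoint
lemma stmt16_eps_deriv_nonpos {ε : ℝ → ℝ} {e0 : ℝ}
    (hd : HasDerivAt ε e0 0)
    (hmono : AntitoneOn ε (Set.Ici (0 : ℝ))) : e0 ≤ 0 := by
  have h1 : HasDerivWithinAt ε e0 (Ioi 0) 0 := hd.hasDerivWithinAt
  rw [hasDerivWithinAt_iff_tendsto_slope] at h1
  rw [Set.diff_singleton_eq_self (by simp : (0:ℝ) ∉ Ioi 0)] at h1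
  have : ∀ᶠ s in 𝓝[>] (0:ℝ), slope ε 0 s ≤ 0 := by
    filter_upwards [self_mem_nhdsWithin] with s hs
    rw [slope_def_field]
    have hle : ε s ≤ ε 0 := hmono (self_mem_Ici) (mem_Ici.2 (le_of_lt hs)) (le_of_lt hs)
    have hgt : (0:ℝ) < s - 0 := by simpa using hs
    apply div_nonpos_of_nonpos_of_nonneg <;> linarith
  exact le_of_tendsto h1 this


lemma stmt16_taylor {F : H → H} {F' : H → H →L[ℝ] H}
    (hF : ∀ x, HasFDerivAt F (F' x) x) {c y : H} {r M : ℝ}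
    (hy : y ∈ closedBall c r)
    (hLip : ∀ x₁ ∈ closedBall c r, ∀ x₂ ∈ closedBall c r,
      ‖F' x₁ - F' x₂‖ ≤ M * ‖x₁ - x₂‖) :
    ‖F y - F c - F' c (y - c)‖ ≤ M / 2 * ‖y - c‖ ^ 2 := by
  have hr : 0 ≤ r := le_trans dist_nonneg (mem_closedBall.1 hy)
  have hc : c ∈ closedBall c r := mem_closedBall_self hr
  set w : H := y - c with hw
  set g : ℝ → H := fun s => F (c + s • w) - F c - s • (F' c w) with hg
  have hline : ∀ s : ℝ, HasDerivAt (fun s : ℝ => c + s • w) w s := by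
    intro s
    simpa using ((hasDerivAt_id s).smul_const w).const_add c
  have hg' : ∀ s : ℝ, HasDerivAt g (F' (c + s • w) w - F' c w) s := by
    intro s
    have h1 : HasDerivAt (fun s : ℝ => F (c + s • w)) (F' (c + s • w) w) s :=
      (hF (c + s • w)).comp_hasDerivAt s (hline s)
    have h2 : HasDerivAt (fun s : ℝ => s • (F' c w)) (F' c w) s := by
      simpa using (hasDerivAt_id s).smul_const (F' c w)
    exact (h1.sub_const (F c)).sub h2
  have hmem : ∀ s : ℝ, s ∈ Icc (0:ℝ) 1 → c + s • w ∈ closedBall c r := by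
    intro s hs
    rw [mem_closedBall, dist_eq_norm]
    have : ‖c + s • w - c‖ = s * ‖w‖ := by
      rw [add_sub_cancel_left, norm_smul, Real.norm_eq_abs, abs_of_nonneg hs.1]
    rw [this]
    have hwr : ‖w‖ ≤ r := by
      rw [hw, ← dist_eq_norm]; exact mem_closedBall.1 hy
    nlinarith [norm_nonneg w, hs.1, hs.2]
  have hBd : ∀ s : ℝ, HasDerivAt (fun s : ℝ => M / 2 * ‖w‖ ^ 2 * s ^ 2)
    (M * ‖w‖ ^ 2 * s) s := by
    intro s
    have : HasDerivAt (fun s : ℝ => M / 2 * ‖w‖ ^ 2 * s ^ 2)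
        (M / 2 * ‖w‖ ^ 2 * (2 * s)) s := by
      simpa using (hasDerivAt_pow 2 s).const_mul (M / 2 * ‖w‖ ^ 2)
    convert this using 1
    ring
  have hbound : ∀ s ∈ Ico (0:ℝ) 1,
    ‖F' (c + s • w) w - F' c w‖ ≤ M * ‖w‖ ^ 2 * s := by
    intro s hs
    have h1 : ‖F' (c + s • w) w - F' c w‖ ≤ ‖F' (c + s • w) - F' c‖ * ‖w‖ := by
      have := (F' (c + s • w) - F' c).le_opNorm w
      simpa using this
    have h2 : ‖F' (c + s • w) - F' c‖ ≤ M * (s * ‖w‖) := by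
      have := hLip _ (hmem s ⟨hs.1, hs.2.le⟩) _ hc
      have heq : ‖c + s • w - c‖ = s * ‖w‖ := by
        rw [add_sub_cancel_left, norm_smul, Real.norm_eq_abs, abs_of_nonneg hs.1]
      rw [heq] at this
      exact this
    calc ‖F' (c + s • w) w - F' c w‖ ≤ ‖F' (c + s • w) - F' c‖ * ‖w‖ := h1
      _ ≤ M * (s * ‖w‖) * ‖w‖ := by
          apply mul_le_mul_of_nonneg_right h2 (norm_nonneg w)
      _ = M * ‖w‖ ^ 2 * s := by ring
  have key := image_norm_le_of_norm_deriv_right_le_deriv_boundary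
    (f := g) (f' := fun s => F' (c + s • w) w - F' c w) (a := 0) (b := 1)
    (B := fun s => M / 2 * ‖w‖ ^ 2 * s ^ 2) (B' := fun s => M * ‖w‖ ^ 2 * s)
    (fun s _ => (hg' s).continuousAt.continuousWithinAt)
    (fun s _ => (hg' s).hasDerivWithinAt)
    (by simp [hg]) hBd hbound
  have := key (Set.mem_Icc.2 ⟨zero_le_one, le_rfl⟩)
  have hcy : c + (y - c) = y := by abel
  have hg1 : g 1 = F y - F c - F' c (y - c) := by
    simp only [hg, one_smul, hw, hcy]
  rw [hg1] at this
  rw [one_pow, mul_one, ← hw] at this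
  exact this

lemma stmt16_lipF {F : H → H} {F' : H → H →L[ℝ] H}
    (hF : ∀ x, HasFDerivAt F (F' x) x) {c : H} {r C : ℝ}
    (hbound : ∀ x ∈ closedBall c r, ‖F' x‖ ≤ C)
    {x y : H} (hx : x ∈ closedBall c r) (hy : y ∈ closedBall c r) :
    ‖F y - F x‖ ≤ C * ‖y - x‖ :=
  (convex_closedBall c r).norm_image_sub_le_of_norm_hasFDerivWithin_le
    (fun z hz => (hF z).hasFDerivWithinAt) hbound hx hy

/-- radial projection onto a closed ball -/
def stmt16_proj (c : H) (r : ℝ) (y : H) : H := c + (min 1 (r / ‖y - c‖)) • (y - c)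

lemma stmt16_proj_coeff_nonneg {r n : ℝ} (hr : 0 ≤ r) (_hn : 0 ≤ n) :
    0 ≤ min 1 (r / n) := le_min zero_le_one (by positivity)

lemma stmt16_proj_mem (c : H) {r : ℝ} (hr : 0 ≤ r) (y : H) :
    stmt16_proj c r y ∈ closedBall c r := by
  rw [stmt16_proj, mem_closedBall, dist_eq_norm, add_sub_cancel_left, norm_smul,
    Real.norm_eq_abs, abs_of_nonneg (stmt16_proj_coeff_nonneg hr (norm_nonneg _))]
  rcases eq_or_lt_of_le (norm_nonneg (y - c)) with h0 | h0
  · rw [← h0]; simpa using hr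
  · calc min 1 (r / ‖y - c‖) * ‖y - c‖ ≤ (r / ‖y - c‖) * ‖y - c‖ := by
          apply mul_le_mul_of_nonneg_right (min_le_right _ _) (norm_nonneg _)
      _ = r := by field_simp
lemma stmt16_proj_eq_self (c : H) {r : ℝ} (hr : 0 ≤ r) {y : H}
    (hy : y ∈ closedBall c r) : stmt16_proj c r y = y := by
  rcases eq_or_lt_of_le (norm_nonneg (y - c)) with h0 | h0
  · have : y - c = 0 := by rwa [eq_comm, norm_eq_zero] at h0
    rw [stmt16_proj, this, smul_zero, add_zero]
    have : y = c := by rwa [sub_eq_zero] at this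
    rw [this]
  · have hyr : ‖y - c‖ ≤ r := by rw [← dist_eq_norm]; exact mem_closedBall.1 hy
    have : min 1 (r / ‖y - c‖) = 1 := min_eq_left ((one_le_div h0).2 hyr)
    rw [stmt16_proj, this, one_smul, add_sub_cancel]

lemma stmt16_proj_lip_key {u w : H} {r : ℝ} (hr : 0 ≤ r) (huw : ‖w‖ ≤ ‖u‖) :
    ‖min 1 (r / ‖u‖) • u - min 1 (r / ‖w‖) • w‖ ≤ 2 * ‖u - w‖ := by
  set a := min 1 (r / ‖u‖) with ha
  set b := min 1 (r / ‖w‖) with hb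
  have ha0 : 0 ≤ a := stmt16_proj_coeff_nonneg hr (norm_nonneg u)
  have ha1 : a ≤ 1 := min_le_left _ _
  have hb1 : b ≤ 1 := min_le_left _ _
  rcases eq_or_lt_of_le (norm_nonneg w) with h0 | h0
  · have hw0 : w = 0 := by rwa [eq_comm, norm_eq_zero] at h0
    rw [hw0, smul_zero, sub_zero, sub_zero, norm_smul, Real.norm_eq_abs,
      abs_of_nonneg ha0]
    nlinarith [norm_nonneg u]
  · -- 0 < ‖w‖ ≤ ‖u‖
    have hu0 : (0:ℝ) < ‖u‖ := lt_of_lt_of_le h0 huw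
    have hab : a ≤ b := by
      apply min_le_min le_rfl
      gcongr
    have hkey : (b - a) * ‖w‖ ≤ ‖u‖ - ‖w‖ := by
      rcases min_cases 1 (r / ‖w‖) with ⟨hbe, hble⟩ | ⟨hbe, hble⟩
      · -- b = 1, so ‖w‖ ≤ r
        have hwr : ‖w‖ ≤ r := by
          have := hble
          rwa [le_div_iff₀ h0, one_mul] at this
        rcases min_cases 1 (r / ‖u‖) with ⟨hae, _⟩ | ⟨hae, halt⟩
        · rw [hb, ha, hbe, hae]; nlinarith
        · -- a = r/‖u‖ < 1, so r < ‖u‖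
          have hru : r ≤ ‖u‖ := by nlinarith [(div_lt_one hu0).1 halt]
          rw [hb, ha, hbe, hae]
          have h1 : (1 - r / ‖u‖) * ‖w‖ ≤ (1 - r / ‖u‖) * ‖u‖ := by
            apply mul_le_mul_of_nonneg_left huw
            have : r / ‖u‖ ≤ 1 := le_of_lt halt
            linarith
          have h2 : (1 - r / ‖u‖) * ‖u‖ = ‖u‖ - r := by field_simp
          nlinarith
      · -- b = r/‖w‖ < 1
        have hae : (1:ℝ) ⊓ (r / ‖u‖) = r / ‖u‖ := by
          rcases min_cases 1 (r / ‖u‖) with ⟨hae2, hale⟩ | ⟨hae2, _⟩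
          · exfalso
            have hblt : r / ‖w‖ < 1 := hble
            have hge : (1:ℝ) ≤ r / ‖u‖ := hale
            have : r / ‖u‖ ≤ r / ‖w‖ := by gcongr
            linarith
          · exact hae2
        rw [hb, ha, hbe, hae]
        have hru : r ≤ ‖u‖ := by
          have h3 : r / ‖u‖ ≤ r / ‖w‖ := by gcongr
          have h2 : r / ‖w‖ < 1 := hble
          nlinarith [(div_le_one hu0).1 (le_of_lt (lt_of_le_of_lt h3 h2))]
        have heq : (r / ‖w‖ - r / ‖u‖) * ‖w‖ = r * (‖u‖ - ‖w‖) / ‖u‖ := by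
          field_simp
        rw [heq]
        rw [div_le_iff₀ hu0]
        nlinarith
    have hsplit : a • u - b • w = a • (u - w) + (b - a) • (-w) := by
      module
    calc ‖a • u - b • w‖ = ‖a • (u - w) + (b - a) • (-w)‖ := by rw [hsplit]
      _ ≤ ‖a • (u - w)‖ + ‖(b - a) • (-w)‖ := norm_add_le _ _
      _ = a * ‖u - w‖ + (b - a) * ‖w‖ := by
          rw [norm_smul, norm_smul, Real.norm_eq_abs, Real.norm_eq_abs,
            abs_of_nonneg ha0, abs_of_nonneg (by linarith : (0:ℝ) ≤ b - a),
            norm_neg]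
      _ ≤ 1 * ‖u - w‖ + (‖u‖ - ‖w‖) :=
          add_le_add (mul_le_mul_of_nonneg_right ha1 (norm_nonneg _)) hkey
      _ ≤ 1 * ‖u - w‖ + ‖u - w‖ := by
          have := norm_sub_norm_le u w
          linarith
      _ = 2 * ‖u - w‖ := by ring

lemma stmt16_proj_lip (c : H) {r : ℝ} (hr : 0 ≤ r) (y₁ y₂ : H) :
    ‖stmt16_proj c r y₁ - stmt16_proj c r y₂‖ ≤ 2 * ‖y₁ - y₂‖ := by
  have hdiff : stmt16_proj c r y₁ - stmt16_proj c r y₂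
      = min 1 (r / ‖y₁ - c‖) • (y₁ - c) - min 1 (r / ‖y₂ - c‖) • (y₂ - c) := by
    rw [stmt16_proj, stmt16_proj]; abel
  have hsub : y₁ - c - (y₂ - c) = y₁ - y₂ := by abel
  rcases le_total ‖y₂ - c‖ ‖y₁ - c‖ with h | h
  · rw [hdiff]
    have := stmt16_proj_lip_key (u := y₁ - c) (w := y₂ - c) hr h
    rwa [hsub] at this
  · rw [hdiff]
    have hk := stmt16_proj_lip_key (u := y₂ - c) (w := y₁ - c) hr h
    rw [show y₂ - c - (y₁ - c) = y₂ - y₁ by abel] at hk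
    calc ‖min 1 (r / ‖y₁ - c‖) • (y₁ - c) - min 1 (r / ‖y₂ - c‖) • (y₂ - c)‖
        = ‖min 1 (r / ‖y₂ - c‖) • (y₂ - c) - min 1 (r / ‖y₁ - c‖) • (y₁ - c)‖ :=
          norm_sub_rev _ _
      _ ≤ 2 * ‖y₂ - y₁‖ := hk
      _ = 2 * ‖y₁ - y₂‖ := by rw [norm_sub_rev]


-- the resolvent identity
lemma stmt16_res_id (A : H →L[ℝ] H) (ε : ℝ → ℝ) (Rinv : ℝ → H →L[ℝ] H)
    (hRinvl : ∀ t ∈ Set.Ici (0 : ℝ),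
      (Rinv t).comp (A + ε t • (1 : H →L[ℝ] H)) = 1)
    (hRinvr : ∀ t ∈ Set.Ici (0 : ℝ),
      (A + ε t • (1 : H →L[ℝ] H)).comp (Rinv t) = 1)
    {s t : ℝ} (hs : s ∈ Set.Ici (0:ℝ)) (ht : t ∈ Set.Ici (0:ℝ)) (w : H) :
    Rinv t w - Rinv s w = (ε s - ε t) • Rinv t (Rinv s w) := by
  set u : H := Rinv t w - Rinv s w with hu
  have h1 : A (Rinv t w) + ε t • (Rinv t w) = w := stmt16_res_apply A (Rinv t) (ε t) (hRinvr t ht) w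
  have h2 : A (Rinv s w) + ε s • (Rinv s w) = w := stmt16_res_apply A (Rinv s) (ε s) (hRinvr s hs) w
  have h3 : A u + ε t • u = (ε s - ε t) • Rinv s w := by
    rw [hu, map_sub, smul_sub, sub_smul]
    have : A (Rinv t w) + ε t • Rinv t w - (A (Rinv s w) + ε t • Rinv s w)
        = A (Rinv t w) - A (Rinv s w) + (ε t • Rinv t w - ε t • Rinv s w) := by abel
    rw [show A (Rinv t w) - A (Rinv s w) + (ε t • Rinv t w - ε t • Rinv s w)
        = (A (Rinv t w) + ε t • Rinv t w) - (A (Rinv s w) + ε s • Rinv s w)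
          + (ε s • Rinv s w - ε t • Rinv s w) from by abel, h1, h2]
    abel
  have h4 : Rinv t (A u + ε t • u) = u := stmt16_res_left A (Rinv t) (ε t) (hRinvl t ht) u
  rw [← h4, h3, map_smul]

-- strong continuity of the resolvent
lemma stmt16_rinv_cont (A : H →L[ℝ] H) (ε ε' : ℝ → ℝ) (Rinv : ℝ → H →L[ℝ] H)
    (hεC1 : ∀ t ∈ Set.Ici (0 : ℝ), HasDerivAt ε (ε' t) t)
    (hεpos : ∀ t ∈ Set.Ici (0 : ℝ), 0 < ε t)
    (hεmono : AntitoneOn ε (Set.Ici (0 : ℝ)))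
    (hmono : ∀ h : H, 0 ≤ ⟪A h, h⟫)
    (hRinvl : ∀ t ∈ Set.Ici (0 : ℝ),
      (Rinv t).comp (A + ε t • (1 : H →L[ℝ] H)) = 1)
    (hRinvr : ∀ t ∈ Set.Ici (0 : ℝ),
      (A + ε t • (1 : H →L[ℝ] H)).comp (Rinv t) = 1)
    (w : H) :
    ContinuousOn (fun s => Rinv s w) (Set.Ici (0:ℝ)) := by
  intro s₀ hs₀
  set D : Set ℝ := Set.Ici (0:ℝ) ∩ Set.Iio (s₀ + 1) with hD
  have hDmem : D ∈ 𝓝[Set.Ici (0:ℝ)] s₀ :=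
    Filter.inter_mem self_mem_nhdsWithin
      (mem_nhdsWithin_of_mem_nhds (Iio_mem_nhds (lt_add_one s₀)))
  have hsub : ContinuousWithinAt (fun s => Rinv s w) D s₀ := by
    have hC : 0 < ε (s₀ + 1) := hεpos _ (by simp; linarith [mem_Ici.1 hs₀])
    set C : ℝ := ‖Rinv s₀ w‖ / ε (s₀ + 1) with hC2
    have hCnn : 0 ≤ C := by positivity
    rw [ContinuousWithinAt, ← tendsto_sub_nhds_zero_iff]
    apply squeeze_zero_norm' (a := fun s => |ε s₀ - ε s| * C)
    · filter_upwards [self_mem_nhdsWithin] with s hs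
      have hs0 : s ∈ Set.Ici (0:ℝ) := hs.1
      have hid := stmt16_res_id A ε Rinv hRinvl hRinvr hs₀ hs0 w
      rw [hid, norm_smul, Real.norm_eq_abs]
      apply mul_le_mul_of_nonneg_left _ (abs_nonneg _)
      calc ‖Rinv s (Rinv s₀ w)‖ ≤ ‖Rinv s₀ w‖ / ε s :=
            stmt16_rinv_norm A (Rinv s) (ε s) (hεpos s hs0) hmono (hRinvr s hs0) _
        _ ≤ C := by
            rw [hC2]
            exact div_le_div_of_nonneg_left (norm_nonneg _) hC
              (hεmono hs0 (by simp; linarith [mem_Ici.1 hs₀]) (le_of_lt hs.2))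
    · have hcε : Filter.Tendsto ε (𝓝[D] s₀) (𝓝 (ε s₀)) :=
        ((hεC1 s₀ hs₀).continuousAt.continuousWithinAt (s := D)).tendsto
      have : Filter.Tendsto (fun s => |ε s₀ - ε s| * C) (𝓝[D] s₀) (𝓝 (|ε s₀ - ε s₀| * C)) := by
        apply Filter.Tendsto.mul_const
        exact ((tendsto_const_nhds.sub hcε).abs)
      simpa using this
  exact hsub.mono_of_mem_nhdsWithin hDmem


set_option maxHeartbeats 1000000 in
lemma stmt16_invariant
    (F : H → H) (F' : H → H →L[ℝ] H)
    (hF : ∀ x, HasFDerivAt F (F' x) x)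
    (xhat x₀ : H) (hsol : F xhat = 0)
    (ε ε' : ℝ → ℝ)
    (hεC1 : ∀ t ∈ Set.Ici (0 : ℝ), HasDerivAt ε (ε' t) t)
    (hεpos : ∀ t ∈ Set.Ici (0 : ℝ), 0 < ε t)
    (hεmono : AntitoneOn ε (Set.Ici (0 : ℝ)))
    (hratio : MonotoneOn (fun t => ε' t / ε t) (Set.Ici (0 : ℝ)))
    (hε0 : |ε' 0| < ε 0)
    (M₂ CG ρ : ℝ) (hM₂ : 0 < M₂) (hCG : 0 < CG)
    (hρ : ρ = (ε 0 - |ε' 0|) / (M₂ + CG * ε 0))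
    (hLip : ∀ x₁ ∈ Metric.closedBall xhat ρ, ∀ x₂ ∈ Metric.closedBall xhat ρ,
      ‖F' x₁ - F' x₂‖ ≤ M₂ * ‖x₁ - x₂‖)
    (G : H → H →L[ℝ] H)
    (hGfact : ∀ x ∈ Metric.closedBall xhat ρ, F' x = (F' x₀).comp (G x))
    (hGnear : ∀ x ∈ Metric.closedBall xhat ρ, ‖G x - 1‖ ≤ CG * ‖x₀ - x‖)
    (hnonneg : ∀ h : H, 0 ≤ ⟪F' x₀ h, h⟫)
    (hx₀ : ‖x₀ - xhat‖ < ρ)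
    (v : H) (hv : xhat - x₀ = F' x₀ v)
    (hsource : (M₂ + CG * ε 0) * ε 0 * Real.sqrt (2 * ‖v‖ / M₂) ≤ ε 0 - |ε' 0|)
    (Rinv : ℝ → H →L[ℝ] H)
    (hRinvl : ∀ t ∈ Set.Ici (0 : ℝ),
      (Rinv t).comp (F' x₀ + ε t • (1 : H →L[ℝ] H)) = 1)
    (hRinvr : ∀ t ∈ Set.Ici (0 : ℝ),
      (F' x₀ + ε t • (1 : H →L[ℝ] H)).comp (Rinv t) = 1)
    (xx : ℝ → H)
    (hxc : ∀ t ∈ Set.Ici (0:ℝ), ContinuousAt xx t)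
    (hxder : ∀ t ∈ Set.Ici (0:ℝ), xx t ∈ Metric.closedBall xhat ρ →
      HasDerivAt xx (-(Rinv t) (F (xx t) + ε t • (xx t - x₀))) t)
    (hx0 : xx 0 = x₀) :
    ∀ t ∈ Set.Ici (0:ℝ), ‖xx t - xhat‖ ≤ ρ / ε 0 * ε t := by
  have hε0pos : 0 < ε 0 := hεpos 0 Set.self_mem_Ici
  have habs : 0 ≤ |ε' 0| := abs_nonneg _
  have hden : 0 < M₂ + CG * ε 0 := by positivity
  have hρpos : 0 < ρ := by
    rw [hρ]
    apply div_pos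
    · linarith
    · exact hden
  set K : ℝ := ρ / ε 0 with hKdef
  have hKpos : 0 < K := div_pos hρpos hε0pos
  have hKε0 : K * ε 0 = ρ := by rw [hKdef]; exact div_mul_cancel₀ ρ hε0pos.ne'
  have hεle : ∀ t ∈ Set.Ici (0:ℝ), ε t ≤ ε 0 := fun t ht =>
    hεmono self_mem_Ici ht ht
  have hε'0 : ε' 0 ≤ 0 := stmt16_eps_deriv_nonpos (hεC1 0 Set.self_mem_Ici) hεmono
  have habs' : |ε' 0| = -(ε' 0) := abs_of_nonpos hε'0
  have hE : ε 0 - |ε' 0| = ρ * (M₂ + CG * ε 0) := by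
    rw [hρ]; field_simp
  -- source condition
  have hvK : ‖v‖ ≤ M₂ * K ^ 2 / 2 := by
    have hs0 : 0 ≤ 2 * ‖v‖ / M₂ := by positivity
    have h1 : ε 0 * Real.sqrt (2 * ‖v‖ / M₂) ≤ ρ := by
      nlinarith [hsource, hE, Real.sqrt_nonneg (2 * ‖v‖ / M₂), hden]
    have h2 : Real.sqrt (2 * ‖v‖ / M₂) ≤ K := by
      rw [hKdef, le_div_iff₀ hε0pos]; linarith [h1]
    have h3 := Real.sq_sqrt hs0
    have h4 : 2 * ‖v‖ / M₂ ≤ K ^ 2 := by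
      nlinarith [Real.sqrt_nonneg (2 * ‖v‖ / M₂)]
    have h5 : 2 * ‖v‖ ≤ M₂ * K ^ 2 := by
      rw [div_le_iff₀ hM₂] at h4; linarith
    linarith
  set d0 : ℝ := ‖x₀ - xhat‖ with hd0def
  have hd0 : d0 < K * ε 0 := by rw [hKε0]; exact hx₀
  have hd0nn : 0 ≤ d0 := norm_nonneg _
  -- the core strict differential inequality
  have hcore : ∀ t ∈ Set.Ici (0:ℝ),
      ε t * (CG * d0 * K + M₂ / 2 * K ^ 2 + ‖v‖ - K) < K * ε' t := by
    intro t ht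
    have hεt : 0 < ε t := hεpos t ht
    have hstep1 : (CG * d0 * K + M₂ / 2 * K ^ 2 + ‖v‖ - K) * ε 0 < K * ε' 0 := by
      have hE2 : K * (ε 0 - |ε' 0|) = M₂ * K ^ 2 * ε 0 + CG * K ^ 2 * ε 0 ^ 2 := by
        rw [hE, ← hKε0]; ring
      have f1 : CG * K * ε 0 * d0 < CG * K * ε 0 * (K * ε 0) :=
        mul_lt_mul_of_pos_left hd0 (by positivity)
      have f2 : ‖v‖ * ε 0 ≤ M₂ * K ^ 2 / 2 * ε 0 :=
        mul_le_mul_of_nonneg_right hvK hε0pos.le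
      have f3 : K * ε' 0 = -(K * |ε' 0|) := by rw [habs']; ring
      nlinarith [f1, f2, f3, hE2]
    have hstep2 : CG * d0 * K + M₂ / 2 * K ^ 2 + ‖v‖ - K < K * (ε' 0 / ε 0) := by
      rw [show K * (ε' 0 / ε 0) = K * ε' 0 / ε 0 from by ring, lt_div_iff₀ hε0pos]
      exact hstep1
    have hstep3 : K * (ε' 0 / ε 0) ≤ K * (ε' t / ε t) :=
      mul_le_mul_of_nonneg_left (hratio self_mem_Ici ht ht) hKpos.le
    have hstep4 : CG * d0 * K + M₂ / 2 * K ^ 2 + ‖v‖ - K < K * (ε' t / ε t) :=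
      lt_of_lt_of_le hstep2 hstep3
    have := mul_lt_mul_of_pos_left hstep4 hεt
    have heq : ε t * (K * (ε' t / ε t)) = K * ε' t := by
      field_simp
    rw [heq] at this
    exact this
  -- setup of the crossing argument
  set W : ℝ → ℝ := fun t => ‖xx t - xhat‖ ^ 2 - (K * ε t) ^ 2 with hWdef
  have hWcont : ∀ s ∈ Set.Ici (0:ℝ), ContinuousAt W s := by
    intro s hs
    exact (((hxc s hs).sub continuousAt_const).norm.pow 2).sub
      ((continuousAt_const.mul (hεC1 s hs).continuousAt).pow 2)
  suffices hfin : ∀ t ∈ Set.Ici (0:ℝ), W t ≤ 0 by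
    intro t ht
    have h1 := hfin t ht
    have h2 : 0 < K * ε t := mul_pos hKpos (hεpos t ht)
    have h3 : 0 ≤ ‖xx t - xhat‖ := norm_nonneg _
    rw [hWdef] at h1
    simp only at h1
    nlinarith
  by_contra hcon
  push_neg at hcon
  obtain ⟨t₁, ht₁, hWt₁⟩ := hcon
  set U : Set ℝ := {t : ℝ | 0 ≤ t ∧ 0 < W t} with hUdef
  have hUne : U.Nonempty := ⟨t₁, ht₁, by linarith⟩
  have hUbdd : BddBelow U := ⟨0, fun u hu => hu.1⟩
  set ts : ℝ := sInf U with htsdef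
  have hts0 : 0 ≤ ts := le_csInf hUne (fun u hu => hu.1)
  have htscl : ts ∈ closure U := csInf_mem_closure hUne hUbdd
  have hnb : (𝓝[U] ts).NeBot := mem_closure_iff_nhdsWithin_neBot.1 htscl
  have hWts_ge : 0 ≤ W ts := by
    apply ge_of_tendsto ((hWcont ts hts0).continuousWithinAt (s := U))
    filter_upwards [self_mem_nhdsWithin] with u hu
    exact hu.2.le
  have hW0 : W 0 < 0 := by
    rw [hWdef]
    simp only [hx0]
    nlinarith [hd0, hd0nn, mul_pos hKpos hε0pos]
  have htspos : 0 < ts := by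
    rcases eq_or_lt_of_le hts0 with h | h
    · exfalso
      have h2 := hWts_ge
      rw [← h] at h2
      linarith
    · exact h
  have hWle_lt : ∀ s, 0 ≤ s → s < ts → W s ≤ 0 := by
    intro s hs hsts
    by_contra hWs
    push_neg at hWs
    have : s ∈ U := ⟨hs, hWs⟩
    have := csInf_le hUbdd this
    linarith [htsdef ▸ this]
  have hWts_le : W ts ≤ 0 := by
    have hclo : ts ∈ closure (Ico 0 ts) := by
      rw [closure_Ico (ne_of_lt htspos)]
      exact ⟨hts0, le_rfl⟩
    have hnb2 : (𝓝[Ico 0 ts] ts).NeBot := mem_closure_iff_nhdsWithin_neBot.1 hclo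
    apply le_of_tendsto ((hWcont ts hts0).continuousWithinAt (s := Ico 0 ts))
    filter_upwards [self_mem_nhdsWithin] with s hs
    exact hWle_lt s hs.1 hs.2
  have hWts : W ts = 0 := le_antisymm hWts_le hWts_ge
  -- at the crossing time
  set z : H := xx ts - xhat with hzdef
  have hεts : 0 < ε ts := hεpos ts hts0
  have hKεts : 0 < K * ε ts := mul_pos hKpos hεts
  have hψ : ‖z‖ = K * ε ts := by
    have h1 : ‖z‖ ^ 2 = (K * ε ts) ^ 2 := by
      have := hWts; rw [hWdef] at this; simp only at this
      rw [hzdef]; linarith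
    nlinarith [norm_nonneg z, hKεts]
  have hball : xx ts ∈ Metric.closedBall xhat ρ := by
    rw [Metric.mem_closedBall, dist_eq_norm, ← hzdef, hψ]
    calc K * ε ts ≤ K * ε 0 := by
          apply mul_le_mul_of_nonneg_left (hεle ts hts0) hKpos.le
      _ = ρ := hKε0
  have hxhatball : xhat ∈ Metric.closedBall xhat ρ := mem_closedBall_self hρpos.le
  -- derivative at the crossing time
  have hder := hxder ts hts0 hball
  -- Taylor decomposition
  have htay : ‖F (xx ts) - F' xhat z‖ ≤ M₂ / 2 * ‖z‖ ^ 2 := by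
    have := stmt16_taylor hF hball hLip
    rwa [hsol, sub_zero, ← hzdef] at this
  set R₁ : H := F (xx ts) - F' xhat z with hR₁def
  set A : H →L[ℝ] H := F' x₀ with hAdef
  set q : H := G xhat z - z with hqdef
  have hq : ‖q‖ ≤ CG * d0 * ‖z‖ := by
    have h1 : (G xhat - 1) z = q := by
      simp [hqdef, ContinuousLinearMap.sub_apply, ContinuousLinearMap.one_apply]
    calc ‖q‖ = ‖(G xhat - 1) z‖ := by rw [h1]
      _ ≤ ‖G xhat - 1‖ * ‖z‖ := (G xhat - 1).le_opNorm z
      _ ≤ (CG * ‖x₀ - xhat‖) * ‖z‖ := by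
          apply mul_le_mul_of_nonneg_right (hGnear xhat hxhatball) (norm_nonneg _)
      _ = CG * d0 * ‖z‖ := by rw [hd0def]
  have hFx : F (xx ts) = A q + A z + R₁ := by
    have h1 : F' xhat z = A (G xhat z) := by
      rw [hGfact xhat hxhatball]; rfl
    have h2 : A (G xhat z) = A q + A z := by
      rw [hqdef, map_sub A (G xhat z) z]; abel
    rw [hR₁def, h1, h2]; abel
  have hxz : xx ts - x₀ = z + A v := by
    rw [hzdef, hAdef, ← hv]; abel
  have htotal : F (xx ts) + ε ts • (xx ts - x₀)
      = (A z + ε ts • z) + (A q + R₁ + ε ts • (A v)) := by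
    rw [hFx, hxz, smul_add]; abel
  have happ : (Rinv ts) (F (xx ts) + ε ts • (xx ts - x₀))
      = z + ((Rinv ts) (A q) + (Rinv ts) R₁ + ε ts • (Rinv ts) (A v)) := by
    rw [htotal, map_add, stmt16_res_left A (Rinv ts) (ε ts) (hRinvl ts hts0) z,
      map_add, map_add, map_smul]
  set dv : H := -(Rinv ts) (F (xx ts) + ε ts • (xx ts - x₀)) with hdvdef
  have hzder : HasDerivAt (fun t => xx t - xhat) dv ts := hder.sub_const xhat
  -- inner product bound
  have hdvz : ⟪dv, z⟫ = -(‖z‖^2) - ⟪(Rinv ts) (A q), z⟫ - ⟪(Rinv ts) R₁, z⟫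
      - ε ts * ⟪(Rinv ts) (A v), z⟫ := by
    rw [hdvdef, happ]
    rw [inner_neg_left, inner_add_left, inner_add_left, inner_add_left,
      real_inner_smul_left, real_inner_self_eq_norm_sq]
    ring
  have hb1 : -⟪(Rinv ts) (A q), z⟫ ≤ (CG * d0 * ‖z‖) * ‖z‖ := by
    calc -⟪(Rinv ts) (A q), z⟫ ≤ |⟪(Rinv ts) (A q), z⟫| := neg_le_abs _
      _ ≤ ‖(Rinv ts) (A q)‖ * ‖z‖ := abs_real_inner_le_norm _ _
      _ ≤ ‖q‖ * ‖z‖ := by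
          apply mul_le_mul_of_nonneg_right
            (stmt16_rinvA_norm A (Rinv ts) (ε ts) hεts hnonneg (hRinvr ts hts0) q)
            (norm_nonneg _)
      _ ≤ (CG * d0 * ‖z‖) * ‖z‖ :=
          mul_le_mul_of_nonneg_right hq (norm_nonneg _)
  have hb2 : -⟪(Rinv ts) R₁, z⟫ ≤ (M₂ / 2 * ‖z‖^2 / ε ts) * ‖z‖ := by
    calc -⟪(Rinv ts) R₁, z⟫ ≤ |⟪(Rinv ts) R₁, z⟫| := neg_le_abs _
      _ ≤ ‖(Rinv ts) R₁‖ * ‖z‖ := abs_real_inner_le_norm _ _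
      _ ≤ (‖R₁‖ / ε ts) * ‖z‖ := by
          apply mul_le_mul_of_nonneg_right
            (stmt16_rinv_norm A (Rinv ts) (ε ts) hεts hnonneg (hRinvr ts hts0) R₁)
            (norm_nonneg _)
      _ ≤ (M₂ / 2 * ‖z‖^2 / ε ts) * ‖z‖ := by
          apply mul_le_mul_of_nonneg_right _ (norm_nonneg _)
          gcongr
  have hb3 : -(ε ts * ⟪(Rinv ts) (A v), z⟫) ≤ ε ts * (‖v‖ * ‖z‖) := by
    have h1 : -⟪(Rinv ts) (A v), z⟫ ≤ ‖v‖ * ‖z‖ := by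
      calc -⟪(Rinv ts) (A v), z⟫ ≤ |⟪(Rinv ts) (A v), z⟫| := neg_le_abs _
        _ ≤ ‖(Rinv ts) (A v)‖ * ‖z‖ := abs_real_inner_le_norm _ _
        _ ≤ ‖v‖ * ‖z‖ := by
            apply mul_le_mul_of_nonneg_right
              (stmt16_rinvA_norm A (Rinv ts) (ε ts) hεts hnonneg (hRinvr ts hts0) v)
              (norm_nonneg _)
    calc -(ε ts * ⟪(Rinv ts) (A v), z⟫) = ε ts * (-⟪(Rinv ts) (A v), z⟫) := by ring
      _ ≤ ε ts * (‖v‖ * ‖z‖) := mul_le_mul_of_nonneg_left h1 hεts.le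
  -- combine
  have hip : ⟪dv, z⟫ < K ^ 2 * ε ts * ε' ts := by
    have hcomb : ⟪dv, z⟫ ≤ -(‖z‖^2) + (CG * d0 * ‖z‖) * ‖z‖
        + (M₂ / 2 * ‖z‖^2 / ε ts) * ‖z‖ + ε ts * (‖v‖ * ‖z‖) := by
      rw [hdvz]; linarith
    have hsimp : -(‖z‖^2) + (CG * d0 * ‖z‖) * ‖z‖
        + (M₂ / 2 * ‖z‖^2 / ε ts) * ‖z‖ + ε ts * (‖v‖ * ‖z‖)
        = K * (ε ts)^2 * (CG * d0 * K + M₂ / 2 * K ^ 2 + ‖v‖ - K) := by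
      rw [hψ]; field_simp; ring
    rw [hsimp] at hcomb
    have hmul := mul_lt_mul_of_pos_left (hcore ts hts0) hKεts
    calc ⟪dv, z⟫ ≤ K * (ε ts)^2 * (CG * d0 * K + M₂ / 2 * K ^ 2 + ‖v‖ - K) := hcomb
      _ < K ^ 2 * ε ts * ε' ts := by nlinarith [hmul]
  -- derivative of W at ts
  have hinner : HasDerivAt (fun t => ⟪xx t - xhat, xx t - xhat⟫)
      (⟪z, dv⟫ + ⟪dv, z⟫) ts := by
    have := HasDerivAt.inner ℝ hzder hzder
    simpa [hzdef] using this
  have hnormsq : HasDerivAt (fun t => ‖xx t - xhat‖^2) (2 * ⟪dv, z⟫) ts := by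
    have heqf : (fun t => ‖xx t - xhat‖^2) = (fun t => ⟪xx t - xhat, xx t - xhat⟫) := by
      funext t; rw [real_inner_self_eq_norm_sq]
    rw [heqf]
    have : ⟪z, dv⟫ + ⟪dv, z⟫ = 2 * ⟪dv, z⟫ := by
      rw [real_inner_comm]; ring
    rw [← this]
    exact hinner
  have hε2 : HasDerivAt (fun t => (K * ε t)^2) (2 * (K * ε ts) * (K * ε' ts)) ts := by
    have h1 : HasDerivAt (fun t => K * ε t) (K * ε' ts) ts :=
      (hεC1 ts hts0).const_mul K
    have : HasDerivAt (fun t => (K * ε t)^2) (↑2 * (K * ε ts) ^ (2 - 1) * (K * ε' ts)) ts :=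
      h1.pow 2
    convert this using 1
    ring
  have hWder : HasDerivAt W (2 * ⟪dv, z⟫ - 2 * (K * ε ts) * (K * ε' ts)) ts :=
    hnormsq.sub hε2
  have hWd_neg : 2 * ⟪dv, z⟫ - 2 * (K * ε ts) * (K * ε' ts) < 0 := by
    nlinarith [hip]
  -- eventually negative to the right of ts
  have hIoi : ∀ᶠ s in 𝓝[Ioi ts \ {ts}] ts, W s < 0 := by
    have hslope := hWder.hasDerivWithinAt (s := Ioi ts)
    rw [hasDerivWithinAt_iff_tendsto_slope] at hslope
    have hev := hslope.eventually (Iio_mem_nhds hWd_neg)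
    rw [Set.diff_singleton_eq_self (by simp : ts ∉ Ioi ts)] at hev ⊢
    filter_upwards [hev, self_mem_nhdsWithin] with s hs1 hs2
    rw [slope_def_field, hWts, sub_zero] at hs1
    have hspos : 0 < s - ts := by simpa [sub_pos] using hs2
    have := mul_neg_of_neg_of_pos hs1 hspos
    rw [div_mul_cancel₀ _ (ne_of_gt hspos)] at this
    exact this
  -- contradiction with the definition of sInf
  have hUsub : U ⊆ Ioi ts \ {ts} := by
    intro u hu
    have h1 : ts ≤ u := csInf_le hUbdd hu
    have h2 : u ≠ ts := by
      intro he
      rw [he] at hu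
      exact absurd hWts (by linarith [hu.2] : W ts ≠ 0)
    have h3 : ts < u := lt_of_le_of_ne h1 (Ne.symm h2)
    exact ⟨h3, h2⟩
  have hmono' : 𝓝[U] ts ≤ 𝓝[Ioi ts \ {ts}] ts := nhdsWithin_mono ts hUsub
  have hcontra : ∀ᶠ s in 𝓝[U] ts, W s < 0 ∧ 0 < W s := by
    filter_upwards [hmono' hIoi, self_mem_nhdsWithin] with s h1 h2
    exact ⟨h1, h2.2⟩
  obtain ⟨s, hs1, hs2⟩ := hcontra.exists
  linarith



variable [CompleteSpace H]

-- The existence construction.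
set_option maxHeartbeats 2000000 in
lemma stmt16_exists
    (F : H → H) (F' : H → H →L[ℝ] H)
    (hF : ∀ x, HasFDerivAt F (F' x) x)
    (xhat x₀ : H) (hsol : F xhat = 0)
    (ε ε' : ℝ → ℝ)
    (hεC1 : ∀ t ∈ Set.Ici (0 : ℝ), HasDerivAt ε (ε' t) t)
    (hεpos : ∀ t ∈ Set.Ici (0 : ℝ), 0 < ε t)
    (hεmono : AntitoneOn ε (Set.Ici (0 : ℝ)))
    (M₂ ρ : ℝ) (hρpos : 0 < ρ)
    (hLip : ∀ x₁ ∈ Metric.closedBall xhat ρ, ∀ x₂ ∈ Metric.closedBall xhat ρ,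
      ‖F' x₁ - F' x₂‖ ≤ M₂ * ‖x₁ - x₂‖)
    (hM₂ : 0 < M₂)
    (hnonneg : ∀ h : H, 0 ≤ ⟪F' x₀ h, h⟫)
    (Rinv : ℝ → H →L[ℝ] H)
    (hRinvl : ∀ t ∈ Set.Ici (0 : ℝ),
      (Rinv t).comp (F' x₀ + ε t • (1 : H →L[ℝ] H)) = 1)
    (hRinvr : ∀ t ∈ Set.Ici (0 : ℝ),
      (F' x₀ + ε t • (1 : H →L[ℝ] H)).comp (Rinv t) = 1) :
    ∃ X : ℝ → H, X 0 = x₀ ∧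
      (∀ t ∈ Set.Ici (0:ℝ), HasDerivAt X
        (-(Rinv (max t 0)) (F (stmt16_proj xhat ρ (X t))
          + ε (max t 0) • (stmt16_proj xhat ρ (X t) - x₀))) t) ∧
      (∀ (b : ℝ), 0 ≤ b → ∀ (y : ℝ → H), y 0 = x₀ →
        (∀ t ∈ Set.Ico (0:ℝ) b, HasDerivAt y
          (-(Rinv (max t 0)) (F (stmt16_proj xhat ρ (y t))
            + ε (max t 0) • (stmt16_proj xhat ρ (y t) - x₀))) t) →
        (∀ t ∈ Set.Icc (0:ℝ) b, ContinuousWithinAt y (Set.Icc (0:ℝ) b) t) →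
        ∀ t ∈ Set.Icc (0:ℝ) b, y t = X t) := by
  set P : H → H := stmt16_proj xhat ρ with hP
  set A : H →L[ℝ] H := F' x₀ with hA
  set LF : ℝ := ‖F' xhat‖ + M₂ * ρ with hLF
  have hε0pos : 0 < ε 0 := hεpos 0 Set.self_mem_Ici
  have hLF0 : 0 ≤ LF := by positivity
  have hFbound : ∀ x ∈ closedBall xhat ρ, ‖F' x‖ ≤ LF := by
    intro x hx
    have h1 : ‖F' x - F' xhat‖ ≤ M₂ * ‖x - xhat‖ :=
      hLip x hx xhat (mem_closedBall_self hρpos.le)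
    have h2 : ‖x - xhat‖ ≤ ρ := by rw [← dist_eq_norm]; exact mem_closedBall.1 hx
    calc ‖F' x‖ = ‖F' xhat + (F' x - F' xhat)‖ := by rw [add_sub_cancel]
      _ ≤ ‖F' xhat‖ + ‖F' x - F' xhat‖ := norm_add_le _ _
      _ ≤ ‖F' xhat‖ + M₂ * ρ := by nlinarith
  set Num : ℝ := LF * ρ + ε 0 * (ρ + ‖xhat - x₀‖) with hNum
  have hNum0 : 0 ≤ Num := by positivity
  set V : ℝ → H → H := fun t y =>
    -(Rinv (max t 0)) (F (P y) + ε (max t 0) • (P y - x₀)) with hV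
  -- pointwise facts about V
  have hτ : ∀ t : ℝ, max t 0 ∈ Set.Ici (0:ℝ) := fun t => le_max_right t 0
  have hετ_pos : ∀ t : ℝ, 0 < ε (max t 0) := fun t => hεpos _ (hτ t)
  have hετ_le : ∀ t : ℝ, ε (max t 0) ≤ ε 0 := fun t =>
    hεmono Set.self_mem_Ici (hτ t) (hτ t)
  have hετ_ge : ∀ (b : ℝ), 0 ≤ b → ∀ t : ℝ, t ≤ b → ε b ≤ ε (max t 0) := by
    intro b hb t htb
    exact hεmono (hτ t) hb (max_le htb hb)
  have hFPnorm : ∀ y : H, ‖F (P y)‖ ≤ LF * ρ := by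
    intro y
    have h1 : ‖F (P y) - F xhat‖ ≤ LF * ‖P y - xhat‖ :=
      stmt16_lipF hF hFbound (mem_closedBall_self hρpos.le)
        (stmt16_proj_mem xhat hρpos.le y)
    have h2 : ‖P y - xhat‖ ≤ ρ := by
      rw [← dist_eq_norm]; exact mem_closedBall.1 (stmt16_proj_mem xhat hρpos.le y)
    rw [hsol, sub_zero] at h1
    nlinarith
  have hwnorm : ∀ (t : ℝ) (y : H),
      ‖F (P y) + ε (max t 0) • (P y - x₀)‖ ≤ Num := by
    intro t y
    have h2 : ‖P y - x₀‖ ≤ ρ + ‖xhat - x₀‖ := by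
      calc ‖P y - x₀‖ = ‖(P y - xhat) + (xhat - x₀)‖ := by rw [sub_add_sub_cancel]
        _ ≤ ‖P y - xhat‖ + ‖xhat - x₀‖ := norm_add_le _ _
        _ ≤ ρ + ‖xhat - x₀‖ := by
            have : ‖P y - xhat‖ ≤ ρ := by
              rw [← dist_eq_norm]; exact mem_closedBall.1 (stmt16_proj_mem xhat hρpos.le y)
            linarith
    calc ‖F (P y) + ε (max t 0) • (P y - x₀)‖
        ≤ ‖F (P y)‖ + ‖ε (max t 0) • (P y - x₀)‖ := norm_add_le _ _
      _ ≤ LF * ρ + ε (max t 0) * ‖P y - x₀‖ := by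
          rw [norm_smul, Real.norm_eq_abs, abs_of_pos (hετ_pos t)]
          linarith [hFPnorm y]
      _ ≤ LF * ρ + ε 0 * (ρ + ‖xhat - x₀‖) := by
          have h3 := hετ_le t
          have h4 := hετ_pos t
          nlinarith [norm_nonneg (P y - x₀)]
  have hVnorm : ∀ (b : ℝ), 0 ≤ b → ∀ (t : ℝ), t ≤ b → ∀ y : H,
      ‖V t y‖ ≤ Num / ε b := by
    intro b hb t htb y
    have hεb : 0 < ε b := hεpos b hb
    calc ‖V t y‖ = ‖(Rinv (max t 0)) (F (P y) + ε (max t 0) • (P y - x₀))‖ := by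
          rw [hV]; simp only [norm_neg]
      _ ≤ ‖F (P y) + ε (max t 0) • (P y - x₀)‖ / ε (max t 0) :=
          stmt16_rinv_norm A (Rinv (max t 0)) (ε (max t 0)) (hετ_pos t) hnonneg
            (hRinvr _ (hτ t)) _
      _ ≤ Num / ε b := by
          apply div_le_div₀ hNum0 (hwnorm t y) hεb (hετ_ge b hb t htb)
  -- Lipschitz in the space variable
  have hVsub : ∀ (t : ℝ) (y₁ y₂ : H), V t y₁ - V t y₂
      = -(Rinv (max t 0)) ((F (P y₁) - F (P y₂)) + ε (max t 0) • (P y₁ - P y₂)) := by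
    intro t y₁ y₂
    rw [hV]
    simp only
    have h1 : (F (P y₁) - F (P y₂)) + ε (max t 0) • (P y₁ - P y₂)
        = (F (P y₁) + ε (max t 0) • (P y₁ - x₀)) - (F (P y₂) + ε (max t 0) • (P y₂ - x₀)) := by
      rw [smul_sub, smul_sub, smul_sub]
      abel
    rw [h1, map_sub]
    abel
  have hVlipR : ∀ (b : ℝ), 0 ≤ b → ∀ (t : ℝ), t ≤ b → ∀ y₁ y₂ : H,
      ‖V t y₁ - V t y₂‖ ≤ (2 * (LF + ε 0) / ε b) * ‖y₁ - y₂‖ := by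
    intro b hb t htb y₁ y₂
    have hεb : 0 < ε b := hεpos b hb
    have hPlip : ‖P y₁ - P y₂‖ ≤ 2 * ‖y₁ - y₂‖ := stmt16_proj_lip xhat hρpos.le y₁ y₂
    have hFlip : ‖F (P y₁) - F (P y₂)‖ ≤ LF * ‖P y₁ - P y₂‖ := by
      have := stmt16_lipF hF hFbound (stmt16_proj_mem xhat hρpos.le y₂)
        (stmt16_proj_mem xhat hρpos.le y₁)
      rwa [show P y₁ - P y₂ = P y₁ - P y₂ from rfl] at this
    have hwsub : ‖(F (P y₁) - F (P y₂)) + ε (max t 0) • (P y₁ - P y₂)‖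
        ≤ (LF + ε 0) * ‖P y₁ - P y₂‖ := by
      calc ‖(F (P y₁) - F (P y₂)) + ε (max t 0) • (P y₁ - P y₂)‖
          ≤ ‖F (P y₁) - F (P y₂)‖ + ‖ε (max t 0) • (P y₁ - P y₂)‖ := norm_add_le _ _
        _ ≤ LF * ‖P y₁ - P y₂‖ + ε 0 * ‖P y₁ - P y₂‖ := by
            rw [norm_smul, Real.norm_eq_abs, abs_of_pos (hετ_pos t)]
            have := hετ_le t
            nlinarith [norm_nonneg (P y₁ - P y₂), hεpos 0 Set.self_mem_Ici]
        _ = (LF + ε 0) * ‖P y₁ - P y₂‖ := by ring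
    calc ‖V t y₁ - V t y₂‖
        = ‖(Rinv (max t 0)) ((F (P y₁) - F (P y₂)) + ε (max t 0) • (P y₁ - P y₂))‖ := by
          rw [hVsub, norm_neg]
      _ ≤ ‖(F (P y₁) - F (P y₂)) + ε (max t 0) • (P y₁ - P y₂)‖ / ε (max t 0) :=
          stmt16_rinv_norm A (Rinv (max t 0)) (ε (max t 0)) (hετ_pos t) hnonneg
            (hRinvr _ (hτ t)) _
      _ ≤ ((LF + ε 0) * (2 * ‖y₁ - y₂‖)) / ε b := by
          apply div_le_div₀ _ _ hεb (hετ_ge b hb t htb)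
          · positivity
          · calc ‖(F (P y₁) - F (P y₂)) + ε (max t 0) • (P y₁ - P y₂)‖
                ≤ (LF + ε 0) * ‖P y₁ - P y₂‖ := hwsub
              _ ≤ (LF + ε 0) * (2 * ‖y₁ - y₂‖) := by
                  apply mul_le_mul_of_nonneg_left hPlip
                  positivity
      _ = (2 * (LF + ε 0) / ε b) * ‖y₁ - y₂‖ := by ring
  have hVlip : ∀ (b : ℝ), 0 ≤ b → ∀ (t : ℝ), t ≤ b →
      LipschitzWith (Real.toNNReal (2 * (LF + ε 0) / ε b)) (V t) := by
    intro b hb t htb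
    apply LipschitzWith.of_dist_le_mul
    intro y₁ y₂
    rw [dist_eq_norm, dist_eq_norm, Real.coe_toNNReal]
    · exact hVlipR b hb t htb y₁ y₂
    · exact div_nonneg (by positivity) (hεpos b hb).le
  -- continuity in time
  have hεcont : ContinuousOn ε (Set.Ici (0:ℝ)) := fun s hs =>
    (hεC1 s hs).continuousAt.continuousWithinAt
  have hVcont : ∀ (y : H) (b : ℝ), ContinuousOn (fun t => V t y) (Set.Icc (-1:ℝ) b) := by
    intro y b
    have hVy : (fun t => V t y) = fun t =>
        -((Rinv (max t 0)) (F (P y))) - ε (max t 0) • ((Rinv (max t 0)) (P y - x₀)) := by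
      funext t
      rw [hV]
      simp only
      rw [map_add, map_smul, neg_add]
      abel
    rw [hVy]
    have hmax : ContinuousOn (fun t : ℝ => max t 0) (Set.Icc (-1:ℝ) b) :=
      (continuous_id.max continuous_const).continuousOn
    have hmapsto : Set.MapsTo (fun t : ℝ => max t 0) (Set.Icc (-1:ℝ) b) (Set.Ici (0:ℝ)) :=
      fun t _ => le_max_right t 0
    have hc1 : ContinuousOn (fun t => (Rinv (max t 0)) (F (P y))) (Set.Icc (-1:ℝ) b) :=
      (stmt16_rinv_cont A ε ε' Rinv hεC1 hεpos hεmono hnonneg hRinvl hRinvr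
        (F (P y))).comp hmax hmapsto
    have hc2 : ContinuousOn (fun t => (Rinv (max t 0)) (P y - x₀)) (Set.Icc (-1:ℝ) b) :=
      (stmt16_rinv_cont A ε ε' Rinv hεC1 hεpos hεmono hnonneg hRinvl hRinvr
        (P y - x₀)).comp hmax hmapsto
    have hc3 : ContinuousOn (fun t => ε (max t 0)) (Set.Icc (-1:ℝ) b) :=
      hεcont.comp hmax hmapsto
    exact (hc1.neg).sub (hc3.smul hc2)
  -- Picard–Lindelöf on [-1, n+1], for each n
  have hex : ∀ n : ℕ, ∃ f : ℝ → H, f 0 = x₀ ∧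
      ∀ t ∈ Set.Icc (-1:ℝ) ((n:ℝ)+1),
        HasDerivWithinAt f (V t (f t)) (Set.Icc (-1:ℝ) ((n:ℝ)+1)) t := by
    intro n
    set b : ℝ := (n:ℝ) + 1 with hb
    have hb0 : 0 ≤ b := by positivity
    have hεb : 0 < ε b := hεpos b hb0
    set C : ℝ := Num / ε b with hC
    have hC0 : 0 ≤ C := by positivity
    set R : ℝ := C * (b + 1) + 1 with hR
    have hR0 : 0 ≤ R := by rw [hR]; positivity
    have hpl : IsPicardLindelof V (tmin := -1) (tmax := b) ⟨0, by norm_num, hb0⟩ x₀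
        (Real.toNNReal R) 0 (Real.toNNReal C) (Real.toNNReal (2 * (LF + ε 0) / ε b)) :=
      { lipschitzOnWith := fun t ht => (hVlip b hb0 t ht.2).lipschitzOnWith
        continuousOn := fun x _ => hVcont x b
        norm_le := fun t ht x _ => by
          rw [Real.coe_toNNReal _ hC0]; exact hVnorm b hb0 t ht.2 x
        mul_max_le := by
          rw [Real.coe_toNNReal _ hC0, Real.coe_toNNReal _ hR0, NNReal.coe_zero, sub_zero]
          show C * max b ((0:ℝ) - (-1)) ≤ R - 0
          rw [sub_zero, hR]
          have h1 : max b ((0:ℝ) - (-1)) ≤ b + 1 := by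
            apply max_le <;> linarith
          nlinarith [hC0, h1, le_max_left b ((0:ℝ) - (-1))] }
    exact hpl.exists_eq_forall_mem_Icc_hasDerivWithinAt₀
  choose Xn hXn0 hXnd using hex
  -- full derivative inside the open interval
  have hXnD : ∀ (n : ℕ) (t : ℝ), t ∈ Set.Ioo (-1:ℝ) ((n:ℝ)+1) →
      HasDerivAt (Xn n) (V t (Xn n t)) t := by
    intro n t ht
    exact (hXnd n t (Set.Ioo_subset_Icc_self ht)).hasDerivAt (Icc_mem_nhds ht.1 ht.2)
  -- consistency between the different approximations
  have hcons : ∀ n m : ℕ, ∀ c : ℝ, 0 < c → c ≤ (n:ℝ)+1 → c ≤ (m:ℝ)+1 →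
      ∀ t ∈ Set.Icc (-1:ℝ) c, Xn n t = Xn m t := by
    intro n m c hc hcn hcm
    have hcont : ∀ k : ℕ, c ≤ (k:ℝ)+1 → ContinuousOn (Xn k) (Set.Icc (-1:ℝ) c) := by
      intro k hck t ht
      exact ((hXnd k t ⟨ht.1, le_trans ht.2 hck⟩).continuousWithinAt).mono
        (Set.Icc_subset_Icc le_rfl hck)
    have hder : ∀ k : ℕ, c ≤ (k:ℝ)+1 → ∀ t ∈ Set.Ioo (-1:ℝ) c,
        HasDerivAt (Xn k) (V (min t c) (Xn k t)) t := by
      intro k hck t ht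
      have := hXnD k t ⟨ht.1, lt_of_lt_of_le ht.2 hck⟩
      rwa [min_eq_left ht.2.le]
    exact fun t ht => ODE_solution_unique_of_mem_Icc
      (v := fun s y => V (min s c) y) (s := fun _ => Set.univ)
      (fun s _ => (hVlip c hc.le (min s c) (min_le_right s c)).lipschitzOnWith)
      (⟨by norm_num, hc⟩ : (0:ℝ) ∈ Set.Ioo (-1:ℝ) c)
      (hcont n hcn) (hder n hcn) (fun _ _ => trivial)
      (hcont m hcm) (hder m hcm) (fun _ _ => trivial)
      (by rw [hXn0 n, hXn0 m]) ht
  -- the glued solution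
  set X : ℝ → H := fun t => Xn (Nat.ceil (max t 0)) t with hX
  have hXeq : ∀ (n : ℕ) (t : ℝ), -1 ≤ t → t ≤ (n:ℝ)+1 → X t = Xn n t := by
    intro n t h1 h2
    rw [hX]
    set N : ℕ := Nat.ceil (max t 0) with hN
    have hle : t ≤ (N:ℝ)+1 := by
      calc t ≤ max t 0 := le_max_left t 0
        _ ≤ (N:ℝ) := Nat.le_ceil _
        _ ≤ (N:ℝ)+1 := by linarith
    set c : ℝ := min ((N:ℝ)+1) ((n:ℝ)+1) with hc
    have hcpos : 0 < c := by
      apply lt_min <;> positivity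
    exact hcons N n c hcpos (min_le_left _ _) (min_le_right _ _) t
      ⟨h1, le_min hle h2⟩
  have hX0 : X 0 = x₀ := by
    rw [hX]
    simp only [max_self, Nat.ceil_zero]
    exact hXn0 0
  have hXder : ∀ t ∈ Set.Ici (0:ℝ), HasDerivAt X (V t (X t)) t := by
    intro t ht
    set n : ℕ := Nat.ceil t with hn
    have h1 : t < (n:ℝ)+1 := by
      have := Nat.le_ceil t
      calc t ≤ (n:ℝ) := this
        _ < (n:ℝ)+1 := by linarith
    have h2 : (-1:ℝ) < t := by linarith [mem_Ici.1 ht]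
    have hd := hXnD n t ⟨h2, h1⟩
    have hev : X =ᶠ[𝓝 t] Xn n := by
      filter_upwards [Ioo_mem_nhds h2 h1] with s hs
      exact hXeq n s hs.1.le hs.2.le
    have hXt : X t = Xn n t := hXeq n t h2.le h1.le
    rw [← hXt] at hd
    exact hd.congr_of_eventuallyEq hev
  refine ⟨X, hX0, hXder, ?_⟩
  -- uniqueness of solutions of the projected equation
  intro b hb y hy0 hyder hycont
  intro t ht
  have key : Set.EqOn y X (Set.Icc 0 b) := by
    set n : ℕ := Nat.ceil b with hn
    have hbn : b ≤ (n:ℝ)+1 := by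
      have := Nat.le_ceil b
      linarith
    have hXcont : ContinuousOn X (Set.Icc 0 b) := by
      intro s hs
      have hc1 : ContinuousWithinAt (Xn n) (Set.Icc 0 b) s :=
        ((hXnd n s ⟨by linarith [hs.1], le_trans hs.2 hbn⟩).continuousWithinAt).mono
          (Set.Icc_subset_Icc (by norm_num) hbn)
      exact hc1.congr
        (fun u hu => hXeq n u (by linarith [hu.1]) (le_trans hu.2 hbn))
        (hXeq n s (by linarith [hs.1]) (le_trans hs.2 hbn))
    have hyder' : ∀ s ∈ Set.Ico (0:ℝ) b,
        HasDerivWithinAt y (V (min s b) (y s)) (Set.Ici s) s := by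
      intro s hs
      have h2 := hyder s hs
      rw [min_eq_left hs.2.le]
      exact h2.hasDerivWithinAt
    have hXder' : ∀ s ∈ Set.Ico (0:ℝ) b,
        HasDerivWithinAt X (V (min s b) (X s)) (Set.Ici s) s := by
      intro s hs
      have h2 := hXder s hs.1
      rw [min_eq_left hs.2.le]
      exact h2.hasDerivWithinAt
    exact ODE_solution_unique (v := fun s y' => V (min s b) y')
      (K := Real.toNNReal (2 * (LF + ε 0) / ε b))
      (fun s => hVlip b hb (min s b) (min_le_right s b))
      (fun s hs => hycont s hs) hyder' hXcont hXder' (by rw [hy0, hX0])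
  exact key ht


end Stmt16Aux

/-- Theorem 3.1: convergence of the continuously regularized modified
Newton scheme ẋ = −[F'(x₀)+ε(t)I]⁻¹(F(x) + ε(t)(x − x₀)). -/
theorem stmt16
    {H : Type*} [NormedAddCommGroup H] [InnerProductSpace ℝ H] [CompleteSpace H]
    (F : H → H) (F' : H → H →L[ℝ] H)
    (hF : ∀ x, HasFDerivAt F (F' x) x)
    (xhat x₀ : H) (hsol : F xhat = 0)
    (ε ε' : ℝ → ℝ)
    (hεC1 : ∀ t ∈ Set.Ici (0 : ℝ), HasDerivAt ε (ε' t) t)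
    (hε'cont : ContinuousOn ε' (Set.Ici (0 : ℝ)))
    (hεpos : ∀ t ∈ Set.Ici (0 : ℝ), 0 < ε t)
    (hεmono : AntitoneOn ε (Set.Ici (0 : ℝ)))
    (hεlim : Filter.Tendsto ε Filter.atTop (nhds 0))
    (hratio : MonotoneOn (fun t => ε' t / ε t) (Set.Ici (0 : ℝ)))
    (hε0 : |ε' 0| < ε 0)
    (M₂ CG ρ : ℝ) (hM₂ : 0 < M₂) (hCG : 0 < CG)
    (hρ : ρ = (ε 0 - |ε' 0|) / (M₂ + CG * ε 0))
    (hLip : ∀ x₁ ∈ Metric.closedBall xhat ρ, ∀ x₂ ∈ Metric.closedBall xhat ρ,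
      ‖F' x₁ - F' x₂‖ ≤ M₂ * ‖x₁ - x₂‖)
    (G : H → H →L[ℝ] H)
    (hGfact : ∀ x ∈ Metric.closedBall xhat ρ, F' x = (F' x₀).comp (G x))
    (hGnear : ∀ x ∈ Metric.closedBall xhat ρ, ‖G x - 1‖ ≤ CG * ‖x₀ - x‖)
    (hnonneg : ∀ h : H, 0 ≤ ⟪F' x₀ h, h⟫)
    (hx₀ : ‖x₀ - xhat‖ < ρ)
    (v : H) (hv : xhat - x₀ = F' x₀ v)
    (hsource : (M₂ + CG * ε 0) * ε 0 * Real.sqrt (2 * ‖v‖ / M₂) ≤ ε 0 - |ε' 0|)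
    -- the regularized resolvent [F'(x₀)+ε(t)I]⁻¹
    (Rinv : ℝ → H →L[ℝ] H)
    (hRinvl : ∀ t ∈ Set.Ici (0 : ℝ),
      (Rinv t).comp (F' x₀ + ε t • (1 : H →L[ℝ] H)) = 1)
    (hRinvr : ∀ t ∈ Set.Ici (0 : ℝ),
      (F' x₀ + ε t • (1 : H →L[ℝ] H)).comp (Rinv t) = 1) :
    ∃ x : ℝ → H,
      x 0 = x₀ ∧
      (∀ t ∈ Set.Ici (0 : ℝ),
        HasDerivAt x (-(Rinv t) (F (x t) + ε t • (x t - x₀))) t) ∧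
      (∀ y : ℝ → H, y 0 = x₀ →
        (∀ t ∈ Set.Ici (0 : ℝ),
          HasDerivAt y (-(Rinv t) (F (y t) + ε t • (y t - x₀))) t) →
        ∀ t ∈ Set.Ici (0 : ℝ), y t = x t) ∧
      (∀ t ∈ Set.Ici (0 : ℝ),
        ‖x t - xhat‖ ≤ (ε 0 - |ε' 0|) / (ε 0 * (M₂ + CG * ε 0)) * ε t) := by
  have hε0pos : 0 < ε 0 := hεpos 0 Set.self_mem_Ici
  have hden : 0 < M₂ + CG * ε 0 := by positivity
  have hρpos : 0 < ρ := by
    rw [hρ]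
    apply div_pos
    · linarith [abs_nonneg (ε' 0)]
    · exact hden
  obtain ⟨X, hX0, hXVder, hXuniq⟩ := stmt16_exists F F' hF xhat x₀ hsol ε ε'
    hεC1 hεpos hεmono M₂ ρ hρpos hLip hM₂ hnonneg Rinv hRinvl hRinvr
  have hXc : ∀ t ∈ Set.Ici (0:ℝ), ContinuousAt X t :=
    fun t ht => (hXVder t ht).continuousAt
  have hXodeball : ∀ t ∈ Set.Ici (0:ℝ), X t ∈ Metric.closedBall xhat ρ →
      HasDerivAt X (-(Rinv t) (F (X t) + ε t • (X t - x₀))) t := by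
    intro t ht hb
    have h1 := hXVder t ht
    rwa [max_eq_left (mem_Ici.1 ht), stmt16_proj_eq_self xhat hρpos.le hb] at h1
  have hXinv := stmt16_invariant F F' hF xhat x₀ hsol ε ε' hεC1 hεpos hεmono
    hratio hε0 M₂ CG ρ hM₂ hCG hρ hLip G hGfact hGnear hnonneg hx₀ v hv hsource
    Rinv hRinvl hRinvr X hXc hXodeball hX0
  have hXball : ∀ t ∈ Set.Ici (0:ℝ), X t ∈ Metric.closedBall xhat ρ := by
    intro t ht
    rw [Metric.mem_closedBall, dist_eq_norm]
    calc ‖X t - xhat‖ ≤ ρ / ε 0 * ε t := hXinv t ht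
      _ ≤ ρ / ε 0 * ε 0 := by
          apply mul_le_mul_of_nonneg_left (hεmono Set.self_mem_Ici ht ht)
          positivity
      _ = ρ := by field_simp
  have hXODE : ∀ t ∈ Set.Ici (0:ℝ),
      HasDerivAt X (-(Rinv t) (F (X t) + ε t • (X t - x₀))) t :=
    fun t ht => hXodeball t ht (hXball t ht)
  refine ⟨X, hX0, hXODE, ?_, ?_⟩
  · -- uniqueness
    intro y hy0 hyd t ht
    have hyc : ∀ s ∈ Set.Ici (0:ℝ), ContinuousAt y s :=
      fun s hs => (hyd s hs).continuousAt
    have hyodeball : ∀ s ∈ Set.Ici (0:ℝ), y s ∈ Metric.closedBall xhat ρ →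
        HasDerivAt y (-(Rinv s) (F (y s) + ε s • (y s - x₀))) s :=
      fun s hs _ => hyd s hs
    have hyinv := stmt16_invariant F F' hF xhat x₀ hsol ε ε' hεC1 hεpos hεmono
      hratio hε0 M₂ CG ρ hM₂ hCG hρ hLip G hGfact hGnear hnonneg hx₀ v hv hsource
      Rinv hRinvl hRinvr y hyc hyodeball hy0
    have hyball : ∀ s ∈ Set.Ici (0:ℝ), y s ∈ Metric.closedBall xhat ρ := by
      intro s hs
      rw [Metric.mem_closedBall, dist_eq_norm]
      calc ‖y s - xhat‖ ≤ ρ / ε 0 * ε s := hyinv s hs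
        _ ≤ ρ / ε 0 * ε 0 := by
            apply mul_le_mul_of_nonneg_left (hεmono Set.self_mem_Ici hs hs)
            positivity
        _ = ρ := by field_simp
    have htt : (0:ℝ) ≤ t := mem_Ici.1 ht
    apply hXuniq (t+1) (by linarith) y hy0 ?_ ?_ t ⟨htt, by linarith⟩
    · intro s hs
      rw [max_eq_left hs.1, stmt16_proj_eq_self xhat hρpos.le (hyball s hs.1)]
      exact hyd s hs.1
    · intro s hs
      exact (hyc s hs.1).continuousWithinAt
  · -- the bound
    intro t ht
    have h1 := hXinv t ht
    have hconst : (ε 0 - |ε' 0|) / (ε 0 * (M₂ + CG * ε 0)) = ρ / ε 0 := by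
      rw [hρ, div_div, mul_comm]
    rw [hconst]
    exact h1
end

section
/- Under the hypotheses of the regularized modified Newton theorem (conditions 1, 2, 3 with constants M₂, C(G), ρ, v as there), but with noisy data: F(x) = ψ(x) − y replaced by ψ(x) − y_δ where ‖y − y_δ‖ ≤ δ, and with the strengthened condition ε(0) − |ε̇(0)| ≥ 2[M₂ + C(G)ε(0)]ε(0)√(‖v‖/M₂): if the stopping time τ_δ is chosen so that ε(τ_δ) = (δ/‖v‖)^{1/2}, then the solution x of the noisy regularized flow satisfies ‖x(τ_δ) − x̂‖ ≤ [ρ/(ε(0)‖v‖^{1/2})] δ^{1/2}. In particular ‖x(τ_δ) − x̂‖ → 0 as δ → 0 at rate O(√δ). -/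
set_option maxHeartbeats 2000000


open RealInnerProductSpace

private lemma slope_norm_freq_lt {E : Type*} [NormedAddCommGroup E] [NormedSpace ℝ E]
    {w : ℝ → E} {d : E} {t : ℝ} (hw : HasDerivAt w d t) {r : ℝ}
    (hr : ‖w t + d‖ - ‖w t‖ < r) :
    ∃ᶠ z in nhdsWithin t (Set.Ioi t), slope (fun s => ‖w s‖) t z < r := by
  set c : ℝ := (r - (‖w t + d‖ - ‖w t‖)) / 2 with hc
  have hcpos : 0 < c := by rw [hc]; linarith
  have hlo : (fun z => w z - w t - (z - t) • d) =o[nhds t] fun z => z - t :=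
    hasDerivAt_iff_isLittleO.1 hw
  have hev1 : ∀ᶠ z in nhds t, ‖w z - w t - (z - t) • d‖ ≤ c * ‖z - t‖ := hlo.def hcpos
  have hev2 : ∀ᶠ z in nhdsWithin t (Set.Ioi t), ‖w z - w t - (z - t) • d‖ ≤ c * ‖z - t‖ :=
    hev1.filter_mono nhdsWithin_le_nhds
  have hev3 : ∀ᶠ z in nhdsWithin t (Set.Ioi t), z ∈ Set.Ioc t (t + 1) :=
    Ioc_mem_nhdsGT_of_mem ⟨le_rfl, by linarith⟩
  refine ((hev2.and hev3).mono ?_).frequently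
  rintro z ⟨hz1, hz2, hz3⟩
  have hzt : 0 < z - t := sub_pos.2 hz2
  have hzt1 : z - t ≤ 1 := by linarith
  rw [slope_def_field, div_lt_iff₀ hzt]
  have hnz : ‖z - t‖ = z - t := by rw [Real.norm_eq_abs, abs_of_pos hzt]
  have e1 : ‖w z‖ ≤ ‖w t + (z - t) • d‖ + c * (z - t) := by
    calc ‖w z‖ = ‖(w t + (z - t) • d) + (w z - w t - (z - t) • d)‖ := by congr 1; abel
    _ ≤ ‖w t + (z - t) • d‖ + ‖w z - w t - (z - t) • d‖ := norm_add_le _ _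
    _ ≤ ‖w t + (z - t) • d‖ + c * (z - t) := by rw [hnz] at hz1; linarith
  have e2 : ‖w t + (z - t) • d‖ ≤ (1 - (z - t)) * ‖w t‖ + (z - t) * ‖w t + d‖ := by
    have hid : w t + (z - t) • d = (1 - (z - t)) • w t + (z - t) • (w t + d) := by
      module
    rw [hid]
    calc ‖(1 - (z - t)) • w t + (z - t) • (w t + d)‖
        ≤ ‖(1 - (z - t)) • w t‖ + ‖(z - t) • (w t + d)‖ := norm_add_le _ _
    _ = (1 - (z - t)) * ‖w t‖ + (z - t) * ‖w t + d‖ := by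
        rw [norm_smul, norm_smul, Real.norm_eq_abs, Real.norm_eq_abs,
          abs_of_nonneg (by linarith), abs_of_pos hzt]
  have hlt : (‖w t + d‖ - ‖w t‖) + c < r := by rw [hc]; linarith
  nlinarith [hzt]

/-- Corollary, Section 3: stability of the regularized modified Newton
scheme under noisy data, with stopping time τ_δ chosen so that ε(τ_δ) = (δ/‖v‖)^{1/2}. -/
theorem stmt19
    {H : Type*} [NormedAddCommGroup H] [InnerProductSpace ℝ H] [CompleteSpace H]
    (ψ : H → H) (y yδ : H) (δ : ℝ) (hδ : 0 < δ) (hnoise : ‖y - yδ‖ ≤ δ)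
    (F : H → H) (hFdef : F = fun u => ψ u - y)
    (F' : H → H →L[ℝ] H) (hF : ∀ x, HasFDerivAt F (F' x) x)
    (xhat x₀ : H) (hsol : ψ xhat = y)
    (ε ε' : ℝ → ℝ)
    (hεC1 : ∀ t ∈ Set.Ici (0 : ℝ), HasDerivAt ε (ε' t) t)
    (hεpos : ∀ t ∈ Set.Ici (0 : ℝ), 0 < ε t)
    (hεmono : AntitoneOn ε (Set.Ici (0 : ℝ)))
    (hεlim : Filter.Tendsto ε Filter.atTop (nhds 0))
    (hratio : MonotoneOn (fun t => ε' t / ε t) (Set.Ici (0 : ℝ)))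
    (hε0 : |ε' 0| < ε 0)
    (M₂ CG ρ : ℝ) (hM₂ : 0 < M₂) (hCG : 0 < CG)
    (hρ : ρ = (ε 0 - |ε' 0|) / (M₂ + CG * ε 0))
    (hLip : ∀ x₁ ∈ Metric.closedBall xhat ρ, ∀ x₂ ∈ Metric.closedBall xhat ρ,
      ‖F' x₁ - F' x₂‖ ≤ M₂ * ‖x₁ - x₂‖)
    (G : H → H →L[ℝ] H)
    (hGfact : ∀ x ∈ Metric.closedBall xhat ρ, F' x = (F' x₀).comp (G x))
    (hGnear : ∀ x ∈ Metric.closedBall xhat ρ, ‖G x - 1‖ ≤ CG * ‖x₀ - x‖)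
    (hnonneg : ∀ h : H, 0 ≤ ⟪F' x₀ h, h⟫)
    (hx₀ : ‖x₀ - xhat‖ < ρ)
    (v : H) (hvne : v ≠ 0) (hv : xhat - x₀ = F' x₀ v)
    -- strengthened source condition
    (hsource : 2 * (M₂ + CG * ε 0) * ε 0 * Real.sqrt (‖v‖ / M₂) ≤ ε 0 - |ε' 0|)
    -- the regularized resolvent [F'(x₀)+ε(t)I]⁻¹
    (Rinv : ℝ → H →L[ℝ] H)
    (hRinvl : ∀ t ∈ Set.Ici (0 : ℝ),
      (Rinv t).comp (F' x₀ + ε t • (1 : H →L[ℝ] H)) = 1)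
    (hRinvr : ∀ t ∈ Set.Ici (0 : ℝ),
      (F' x₀ + ε t • (1 : H →L[ℝ] H)).comp (Rinv t) = 1)
    -- stopping time
    (τδ : ℝ) (hτδ : 0 ≤ τδ) (hstop : ε τδ = Real.sqrt (δ / ‖v‖))
    -- x solves the noisy regularized flow up to the stopping time
    (x : ℝ → H) (hx0 : x 0 = x₀)
    (hxode : ∀ t ∈ Set.Icc (0 : ℝ) τδ,
      HasDerivAt x (-(Rinv t) (ψ (x t) - yδ + ε t • (x t - x₀))) t) :
    ‖x τδ - xhat‖ ≤ ρ / (ε 0 * Real.sqrt ‖v‖) * Real.sqrt δ := by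
  have hεpos' : ∀ t : ℝ, 0 ≤ t → 0 < ε t := fun t ht => hεpos t (Set.mem_Ici.mpr ht)
  have hεC1' : ∀ t : ℝ, 0 ≤ t → HasDerivAt ε (ε' t) t := fun t ht => hεC1 t (Set.mem_Ici.mpr ht)
  have hE0 : (0 : ℝ) < ε 0 := hεpos' 0 le_rfl
  have hE0ne : (ε 0) ≠ 0 := hE0.ne'
  have hvpos : (0 : ℝ) < ‖v‖ := norm_pos_iff.mpr hvne
  have hD : (0 : ℝ) < M₂ + CG * ε 0 := by positivity
  have hρpos : 0 < ρ := by rw [hρ]; exact div_pos (sub_pos.2 hε0) hD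
  have hρD : ρ * (M₂ + CG * ε 0) = ε 0 - |ε' 0| := by rw [hρ]; field_simp
  -- source condition in usable form
  have hvle : 4 * (ε 0) ^ 2 * ‖v‖ ≤ M₂ * ρ ^ 2 := by
    have hsq : Real.sqrt (‖v‖ / M₂) ≤ ρ / (2 * ε 0) := by
      rw [le_div_iff₀ (by positivity)]
      nlinarith [hsource, hρD]
    have h3 : ‖v‖ / M₂ ≤ (ρ / (2 * ε 0)) ^ 2 := by
      rw [← Real.sq_sqrt (show (0:ℝ) ≤ ‖v‖ / M₂ by positivity)]
      exact pow_le_pow_left₀ (Real.sqrt_nonneg _) hsq 2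
    rw [div_pow] at h3
    rw [div_le_div_iff₀ hM₂ (by positivity)] at h3
    nlinarith [h3]
  -- resolvent estimates
  have hBappl : ∀ t, 0 ≤ t → ∀ u : H, Rinv t (F' x₀ u + ε t • u) = u := by
    intro t ht u
    have h2 := DFunLike.congr_fun (hRinvl t ht) u
    simpa using h2
  have hBappr : ∀ t, 0 ≤ t → ∀ u : H, F' x₀ (Rinv t u) + ε t • Rinv t u = u := by
    intro t ht u
    have h2 := DFunLike.congr_fun (hRinvr t ht) u
    simpa using h2
  have hBnorm : ∀ t, 0 ≤ t → ∀ u : H, ‖Rinv t u‖ ≤ ‖u‖ / ε t := by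
    intro t ht u
    have hEt := hεpos' t ht
    have h := hBappr t ht u
    have h1 : ⟪u, Rinv t u⟫ = ⟪F' x₀ (Rinv t u), Rinv t u⟫ + ε t * ‖Rinv t u‖ ^ 2 := by
      have hx : ⟪F' x₀ (Rinv t u) + ε t • Rinv t u, Rinv t u⟫
          = ⟪F' x₀ (Rinv t u), Rinv t u⟫ + ε t * ‖Rinv t u‖ ^ 2 := by
        rw [inner_add_left, real_inner_smul_left, real_inner_self_eq_norm_sq]
      rw [h] at hx
      exact hx
    have h2 := hnonneg (Rinv t u)
    have h3 := real_inner_le_norm u (Rinv t u)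
    rw [le_div_iff₀ hEt]
    rcases eq_or_lt_of_le (norm_nonneg (Rinv t u)) with h0 | h0
    · rw [← h0, zero_mul]; exact norm_nonneg u
    · nlinarith
  have hABnorm : ∀ t, 0 ≤ t → ∀ u : H, ‖F' x₀ (Rinv t u)‖ ≤ ‖u‖ := by
    intro t ht u
    have hEt := hεpos' t ht
    have h := hBappr t ht u
    have hexp : ‖u‖ ^ 2 = ‖F' x₀ (Rinv t u)‖ ^ 2 + 2 * (ε t * ⟪F' x₀ (Rinv t u), Rinv t u⟫)
        + (ε t) ^ 2 * ‖Rinv t u‖ ^ 2 := by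
      have hx : ‖F' x₀ (Rinv t u) + ε t • Rinv t u‖ ^ 2 = ‖F' x₀ (Rinv t u)‖ ^ 2
          + 2 * (ε t * ⟪F' x₀ (Rinv t u), Rinv t u⟫) + (ε t) ^ 2 * ‖Rinv t u‖ ^ 2 := by
        rw [norm_add_sq_real, real_inner_smul_right, norm_smul, Real.norm_eq_abs,
          abs_of_pos hEt, mul_pow]
      rw [h] at hx
      exact hx
    have h2 := hnonneg (Rinv t u)
    nlinarith [norm_nonneg (F' x₀ (Rinv t u)), norm_nonneg u, sq_nonneg (ε t * ‖Rinv t u‖)]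
  have hBA : ∀ t, 0 ≤ t → ∀ q : H, Rinv t (F' x₀ q) = F' x₀ (Rinv t q) := by
    intro t ht q
    have h1 := hBappl t ht q
    rw [map_add, map_smul] at h1
    have h2 := hBappr t ht q
    exact (eq_sub_of_add_eq h1).trans (eq_sub_of_add_eq h2).symm
  have hBAnorm : ∀ t, 0 ≤ t → ∀ q : H, ‖Rinv t (F' x₀ q)‖ ≤ ‖q‖ := by
    intro t ht q
    rw [hBA t ht q]
    exact hABnorm t ht q
  have hFhat : F xhat = 0 := by rw [hFdef]; simp [hsol]
  have hx₀ball : x₀ ∈ Metric.closedBall xhat ρ := by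
    rw [Metric.mem_closedBall, dist_eq_norm]; exact hx₀.le
  -- key one-sided derivative estimate
  have hkey : ∀ t, t ∈ Set.Icc (0:ℝ) τδ → ‖x t - xhat‖ ≤ ρ →
      ‖x t - xhat + -(Rinv t) (ψ (x t) - yδ + ε t • (x t - x₀))‖
        ≤ CG * ‖x₀ - xhat‖ * ‖x t - xhat‖ + M₂ / (2 * ε t) * ‖x t - xhat‖ ^ 2
          + ε t * ‖v‖ + δ / ε t := by
    intro t ht hgρ
    have ht0 : (0:ℝ) ≤ t := ht.1
    have hEt : 0 < ε t := hεpos' t ht0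
    set w : H := x t - xhat with hw
    have hzball : ∀ σ : ℝ, 0 ≤ σ → σ ≤ 1 → xhat + σ • w ∈ Metric.closedBall xhat ρ := by
      intro σ h0 h1
      rw [Metric.mem_closedBall, dist_eq_norm]
      have hq : xhat + σ • w - xhat = σ • w := by abel
      rw [hq, norm_smul, Real.norm_eq_abs, abs_of_nonneg h0]
      calc σ * ‖w‖ ≤ 1 * ‖w‖ := mul_le_mul_of_nonneg_right h1 (norm_nonneg _)
      _ = ‖w‖ := one_mul _
      _ ≤ ρ := hgρ
    set φ : ℝ → H := fun σ => Rinv t (F (xhat + σ • w)) - σ • Rinv t (F' x₀ w) with hφdef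
    have hφd : ∀ σ : ℝ,
        HasDerivAt φ (Rinv t (F' (xhat + σ • w) w) - Rinv t (F' x₀ w)) σ := by
      intro σ
      have hp : HasDerivAt (fun σ : ℝ => xhat + σ • w) w σ := by
        simpa using ((hasDerivAt_id σ).smul_const w).const_add xhat
      have h1 : HasDerivAt (fun σ : ℝ => F (xhat + σ • w)) (F' (xhat + σ • w) w) σ :=
        (hF _).comp_hasDerivAt σ hp
      have h2 : HasDerivAt (fun σ : ℝ => Rinv t (F (xhat + σ • w)))
          (Rinv t (F' (xhat + σ • w) w)) σ := (Rinv t).hasFDerivAt.comp_hasDerivAt σ h1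
      have h3 : HasDerivAt (fun σ : ℝ => σ • Rinv t (F' x₀ w)) (Rinv t (F' x₀ w)) σ := by
        simpa using (hasDerivAt_id σ).smul_const (Rinv t (F' x₀ w))
      exact h2.sub h3
    have hφbound : ∀ σ ∈ Set.Ico (0:ℝ) 1,
        ‖Rinv t (F' (xhat + σ • w) w) - Rinv t (F' x₀ w)‖
          ≤ CG * ‖x₀ - xhat‖ * ‖w‖ + (M₂ / ε t * ‖w‖ ^ 2) * σ := by
      rintro σ ⟨h0, h1⟩
      have hz := hzball σ h0 h1.le
      have hdiff : Rinv t (F' (xhat + σ • w) w) - Rinv t (F' x₀ w)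
          = Rinv t (F' (xhat + σ • w) w - F' x₀ w) := (map_sub _ _ _).symm
      have hdist : ‖x₀ - (xhat + σ • w)‖ ≤ ‖x₀ - xhat‖ + σ * ‖w‖ := by
        have hq : x₀ - (xhat + σ • w) = (x₀ - xhat) - σ • w := by abel
        rw [hq]
        calc ‖(x₀ - xhat) - σ • w‖ ≤ ‖x₀ - xhat‖ + ‖σ • w‖ := norm_sub_le _ _
        _ = ‖x₀ - xhat‖ + σ * ‖w‖ := by
            rw [norm_smul, Real.norm_eq_abs, abs_of_nonneg h0]
      have hRA : ‖Rinv t (F' (xhat + σ • w) w - F' x₀ w)‖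
          ≤ CG * (‖x₀ - xhat‖ + σ * ‖w‖) * ‖w‖ := by
        have hfact : F' (xhat + σ • w) w - F' x₀ w = F' x₀ (G (xhat + σ • w) w - w) := by
          rw [hGfact _ hz]
          calc ((F' x₀).comp (G (xhat + σ • w))) w - F' x₀ w
              = F' x₀ (G (xhat + σ • w) w) - F' x₀ w := rfl
          _ = F' x₀ (G (xhat + σ • w) w - w) := (map_sub (F' x₀) _ _).symm
        rw [hfact]
        calc ‖Rinv t (F' x₀ (G (xhat + σ • w) w - w))‖
            ≤ ‖G (xhat + σ • w) w - w‖ := hBAnorm t ht0 _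
        _ = ‖(G (xhat + σ • w) - 1) w‖ := by
            rw [ContinuousLinearMap.sub_apply, ContinuousLinearMap.one_apply]
        _ ≤ ‖G (xhat + σ • w) - 1‖ * ‖w‖ := (G (xhat + σ • w) - 1).le_opNorm w
        _ ≤ (CG * ‖x₀ - (xhat + σ • w)‖) * ‖w‖ :=
            mul_le_mul_of_nonneg_right (hGnear _ hz) (norm_nonneg _)
        _ ≤ CG * (‖x₀ - xhat‖ + σ * ‖w‖) * ‖w‖ := by
            have := mul_le_mul_of_nonneg_left hdist hCG.le
            nlinarith [norm_nonneg w]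
      have hRB : ‖Rinv t (F' (xhat + σ • w) w - F' x₀ w)‖
          ≤ M₂ / ε t * (‖x₀ - xhat‖ + σ * ‖w‖) * ‖w‖ := by
        have hsubap : F' (xhat + σ • w) w - F' x₀ w = (F' (xhat + σ • w) - F' x₀) w := by
          rw [ContinuousLinearMap.sub_apply]
        calc ‖Rinv t (F' (xhat + σ • w) w - F' x₀ w)‖
            ≤ ‖F' (xhat + σ • w) w - F' x₀ w‖ / ε t := hBnorm t ht0 _
        _ ≤ (M₂ * (‖x₀ - xhat‖ + σ * ‖w‖) * ‖w‖) / ε t := by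
            gcongr
            calc ‖F' (xhat + σ • w) w - F' x₀ w‖
                = ‖(F' (xhat + σ • w) - F' x₀) w‖ := by rw [hsubap]
            _ ≤ ‖F' (xhat + σ • w) - F' x₀‖ * ‖w‖ :=
                (F' (xhat + σ • w) - F' x₀).le_opNorm w
            _ ≤ (M₂ * ‖xhat + σ • w - x₀‖) * ‖w‖ :=
                mul_le_mul_of_nonneg_right (hLip _ hz _ hx₀ball) (norm_nonneg _)
            _ = (M₂ * ‖x₀ - (xhat + σ • w)‖) * ‖w‖ := by rw [norm_sub_rev]
            _ ≤ M₂ * (‖x₀ - xhat‖ + σ * ‖w‖) * ‖w‖ := by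
                nlinarith [mul_le_mul_of_nonneg_left hdist hM₂.le, norm_nonneg w]
        _ = M₂ / ε t * (‖x₀ - xhat‖ + σ * ‖w‖) * ‖w‖ := by ring
      rw [hdiff]
      rcases le_total CG (M₂ / ε t) with hc | hc
      · calc ‖Rinv t (F' (xhat + σ • w) w - F' x₀ w)‖
            ≤ CG * (‖x₀ - xhat‖ + σ * ‖w‖) * ‖w‖ := hRA
        _ = CG * ‖x₀ - xhat‖ * ‖w‖ + CG * (σ * ‖w‖ ^ 2) := by ring
        _ ≤ CG * ‖x₀ - xhat‖ * ‖w‖ + (M₂ / ε t * ‖w‖ ^ 2) * σ := by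
            have := mul_le_mul_of_nonneg_right hc
              (show (0:ℝ) ≤ σ * ‖w‖ ^ 2 by positivity)
            nlinarith
      · calc ‖Rinv t (F' (xhat + σ • w) w - F' x₀ w)‖
            ≤ M₂ / ε t * (‖x₀ - xhat‖ + σ * ‖w‖) * ‖w‖ := hRB
        _ = M₂ / ε t * ‖x₀ - xhat‖ * ‖w‖ + (M₂ / ε t * ‖w‖ ^ 2) * σ := by ring
        _ ≤ CG * ‖x₀ - xhat‖ * ‖w‖ + (M₂ / ε t * ‖w‖ ^ 2) * σ := by
            have := mul_le_mul_of_nonneg_right hc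
              (show (0:ℝ) ≤ ‖x₀ - xhat‖ * ‖w‖ by positivity)
            nlinarith
    have hφc : ContinuousOn φ (Set.Icc 0 1) :=
      fun σ _ => (hφd σ).continuousAt.continuousWithinAt
    have hφd' : ∀ σ ∈ Set.Ico (0:ℝ) 1, HasDerivWithinAt φ
        ((fun σ => Rinv t (F' (xhat + σ • w) w) - Rinv t (F' x₀ w)) σ) (Set.Ici σ) σ :=
      fun σ _ => (hφd σ).hasDerivWithinAt
    have hφ0 : ‖φ 0‖ ≤ CG * ‖x₀ - xhat‖ * ‖w‖ * 0 + M₂ / (2 * ε t) * ‖w‖ ^ 2 * 0 ^ 2 := by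
      simp [hφdef, hFhat]
    have hBq : ∀ σ : ℝ, HasDerivAt
        (fun σ : ℝ => CG * ‖x₀ - xhat‖ * ‖w‖ * σ + M₂ / (2 * ε t) * ‖w‖ ^ 2 * σ ^ 2)
        (CG * ‖x₀ - xhat‖ * ‖w‖ + (M₂ / ε t * ‖w‖ ^ 2) * σ) σ := by
      intro σ
      have h1 : HasDerivAt (fun σ : ℝ => CG * ‖x₀ - xhat‖ * ‖w‖ * σ)
          (CG * ‖x₀ - xhat‖ * ‖w‖) σ := by
        simpa using (hasDerivAt_id σ).const_mul (CG * ‖x₀ - xhat‖ * ‖w‖)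
      have h2 : HasDerivAt (fun σ : ℝ => M₂ / (2 * ε t) * ‖w‖ ^ 2 * σ ^ 2)
          (M₂ / (2 * ε t) * ‖w‖ ^ 2 * (2 * σ)) σ := by
        simpa using (hasDerivAt_pow 2 σ).const_mul (M₂ / (2 * ε t) * ‖w‖ ^ 2)
      have h3 := h1.add h2
      exact h3.congr_deriv (by ring)
    have hmvt := image_norm_le_of_norm_deriv_right_le_deriv_boundary hφc hφd' hφ0 hBq hφbound
    have hΦ : ‖Rinv t (F' x₀ w) - Rinv t (F (x t))‖
        ≤ CG * ‖x₀ - xhat‖ * ‖w‖ + M₂ / (2 * ε t) * ‖w‖ ^ 2 := by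
      have h1 := hmvt (Set.right_mem_Icc.mpr zero_le_one)
      have hx1 : xhat + w = x t := by rw [hw]; abel
      rw [norm_sub_rev]
      have h2 : φ 1 = Rinv t (F (x t)) - Rinv t (F' x₀ w) := by
        rw [hφdef]; simp only [one_smul, hx1]
      rw [h2] at h1
      simpa using h1
    -- flow identity
    have hsum : ψ (x t) - yδ + ε t • (x t - x₀)
        = F (x t) + (y - yδ) + ε t • w + ε t • (F' x₀ v) := by
      have hx0' : x t - x₀ = w + (xhat - x₀) := by rw [hw]; abel
      rw [hx0', hv, smul_add, hFdef]
      simp only []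
      abel
    have hBw : Rinv t (F' x₀ w) = w - ε t • Rinv t w := by
      have h := hBappl t ht0 w
      rw [map_add, map_smul] at h
      exact eq_sub_of_add_eq h
    have hrep : w + -(Rinv t) (ψ (x t) - yδ + ε t • (x t - x₀))
        = (Rinv t (F' x₀ w) - Rinv t (F (x t))) - Rinv t (y - yδ)
          - ε t • Rinv t (F' x₀ v) := by
      rw [hsum, map_add, map_add, map_add, map_smul, map_smul, hBw]
      abel
    rw [hrep]
    have hη : ‖Rinv t (y - yδ)‖ ≤ δ / ε t :=
      le_trans (hBnorm t ht0 _) (by gcongr)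
    have hAv : ‖ε t • Rinv t (F' x₀ v)‖ ≤ ε t * ‖v‖ := by
      rw [norm_smul, Real.norm_eq_abs, abs_of_pos hEt]
      exact mul_le_mul_of_nonneg_left (hBAnorm t ht0 v) hEt.le
    calc ‖(Rinv t (F' x₀ w) - Rinv t (F (x t))) - Rinv t (y - yδ) - ε t • Rinv t (F' x₀ v)‖
        ≤ ‖(Rinv t (F' x₀ w) - Rinv t (F (x t))) - Rinv t (y - yδ)‖
          + ‖ε t • Rinv t (F' x₀ v)‖ := norm_sub_le _ _
    _ ≤ (‖Rinv t (F' x₀ w) - Rinv t (F (x t))‖ + ‖Rinv t (y - yδ)‖)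
          + ‖ε t • Rinv t (F' x₀ v)‖ := by
        have := norm_sub_le (Rinv t (F' x₀ w) - Rinv t (F (x t))) (Rinv t (y - yδ))
        linarith
    _ ≤ CG * ‖x₀ - xhat‖ * ‖w‖ + M₂ / (2 * ε t) * ‖w‖ ^ 2 + ε t * ‖v‖ + δ / ε t := by
        linarith [hΦ, hη, hAv]
  -- the barrier argument
  have hbar : ∀ ⦃s : ℝ⦄, s ∈ Set.Icc 0 τδ → ‖x s - xhat‖ ≤ ρ / ε 0 * ε s := by
    apply image_le_of_liminf_slope_right_lt_deriv_boundary'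
      (f := fun s => ‖x s - xhat‖)
      (f' := fun s => ‖x s - xhat + -(Rinv s) (ψ (x s) - yδ + ε s • (x s - x₀))‖
        - ‖x s - xhat‖)
      (B := fun s => ρ / ε 0 * ε s) (B' := fun s => ρ / ε 0 * ε' s)
    · exact fun s hs => (((hxode s hs).continuousAt.sub continuousAt_const).norm).continuousWithinAt
    · intro s hs r hr
      exact slope_norm_freq_lt ((hxode s ⟨hs.1, hs.2.le⟩).sub_const xhat) hr
    · rw [hx0, div_mul_cancel₀ ρ hE0ne]
      exact hx₀.le
    · exact fun s hs =>
        (continuousAt_const.mul (hεC1' s hs.1).continuousAt).continuousWithinAt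
    · exact fun s hs => ((hεC1' s hs.1).const_mul (ρ / ε 0)).hasDerivWithinAt
    · -- contact estimate
      intro t ht hcontact
      obtain ⟨ht0, htlt⟩ := ht
      have hEt : 0 < ε t := hεpos' t ht0
      have hEtE0 : ε t ≤ ε 0 := hεmono Set.self_mem_Ici (Set.mem_Ici.mpr ht0) ht0
      have hEτ : ε τδ ≤ ε t := hεmono (Set.mem_Ici.mpr ht0) (Set.mem_Ici.mpr hτδ) htlt.le
      have hgρ : ‖x t - xhat‖ ≤ ρ := by
        rw [hcontact]
        calc ρ / ε 0 * ε t ≤ ρ / ε 0 * ε 0 :=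
          mul_le_mul_of_nonneg_left hEtE0 (by positivity)
        _ = ρ := div_mul_cancel₀ ρ hE0ne
      have hkey' := hkey t ⟨ht0, htlt.le⟩ hgρ
      rw [hcontact] at hkey'
      have hδe : δ / ε t ≤ ε t * ‖v‖ := by
        rw [div_le_iff₀ hEt]
        have h1 : Real.sqrt (δ / ‖v‖) ≤ ε t := hstop ▸ hEτ
        have h2 : δ / ‖v‖ ≤ ε t ^ 2 := by
          rw [← Real.sq_sqrt (show (0:ℝ) ≤ δ / ‖v‖ by positivity)]
          exact pow_le_pow_left₀ (Real.sqrt_nonneg _) h1 2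
        rw [div_le_iff₀ hvpos] at h2
        nlinarith
      have hM2g : M₂ / (2 * ε t) * (ρ / ε 0 * ε t) ^ 2
          = M₂ * ρ ^ 2 * ε t / (2 * (ε 0) ^ 2) := by
        field_simp
      have hslope : ρ / ε 0 * (ε' 0 / ε 0 * ε t) ≤ ρ / ε 0 * ε' t := by
        have h1 : ε' 0 / ε 0 ≤ ε' t / ε t :=
          hratio Set.self_mem_Ici (Set.mem_Ici.mpr ht0) ht0
        have h2 : ε' 0 / ε 0 * ε t ≤ ε' t := by
          have h3 := mul_le_mul_of_nonneg_right h1 hEt.le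
          rwa [div_mul_cancel₀ _ hEt.ne'] at h3
        exact mul_le_mul_of_nonneg_left h2 (by positivity)
      have habs : -(ρ / ε 0 * (|ε' 0| / ε 0 * ε t)) ≤ ρ / ε 0 * (ε' 0 / ε 0 * ε t) := by
        have h1 : -|ε' 0| / ε 0 ≤ ε' 0 / ε 0 := (div_le_div_iff_of_pos_right hE0).mpr (neg_abs_le _)
        have h2 := mul_le_mul_of_nonneg_right h1 hEt.le
        have heq : -(ρ / ε 0 * (|ε' 0| / ε 0 * ε t)) = ρ / ε 0 * (-|ε' 0| / ε 0 * ε t) := by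
          ring
        rw [heq]
        exact mul_le_mul_of_nonneg_left h2 (div_nonneg hρpos.le hE0.le)
      have hpoly : CG * ‖x₀ - xhat‖ * ρ * ε 0 + M₂ * ρ ^ 2 / 2 + 2 * (ε 0) ^ 2 * ‖v‖
          + ρ * |ε' 0| < ρ * ε 0 := by
        have h1 : CG * ‖x₀ - xhat‖ * ρ * ε 0 < CG * ρ * ρ * ε 0 :=
          mul_lt_mul_of_pos_right
            (mul_lt_mul_of_pos_right (mul_lt_mul_of_pos_left hx₀ hCG) hρpos) hE0
        have h2 : ρ * ρ * (M₂ + CG * ε 0) = ρ * (ε 0 - |ε' 0|) := by rw [← hρD]; ring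
        nlinarith [h1, hvle, h2]
      have hscaled : CG * ‖x₀ - xhat‖ * (ρ / ε 0 * ε t) + M₂ * ρ ^ 2 * ε t / (2 * (ε 0) ^ 2)
          + ε t * ‖v‖ + ε t * ‖v‖ - ρ / ε 0 * ε t
          < -(ρ / ε 0 * (|ε' 0| / ε 0 * ε t)) := by
        have hl : (CG * ‖x₀ - xhat‖ * (ρ / ε 0 * ε t) + M₂ * ρ ^ 2 * ε t / (2 * (ε 0) ^ 2)
            + ε t * ‖v‖ + ε t * ‖v‖ - ρ / ε 0 * ε t) * (2 * (ε 0) ^ 2)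
            = (CG * ‖x₀ - xhat‖ * ρ * ε 0 + M₂ * ρ ^ 2 / 2 + 2 * (ε 0) ^ 2 * ‖v‖
              - ρ * ε 0) * (2 * ε t) := by
          field_simp
          ring
        have hr : (-(ρ / ε 0 * (|ε' 0| / ε 0 * ε t))) * (2 * (ε 0) ^ 2)
            = (-(ρ * |ε' 0|)) * (2 * ε t) := by
          field_simp
        have h5 : (CG * ‖x₀ - xhat‖ * ρ * ε 0 + M₂ * ρ ^ 2 / 2 + 2 * (ε 0) ^ 2 * ‖v‖
            - ρ * ε 0) * (2 * ε t) < (-(ρ * |ε' 0|)) * (2 * ε t) :=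
          mul_lt_mul_of_pos_right (by linarith [hpoly]) (by linarith)
        have h6 : (CG * ‖x₀ - xhat‖ * (ρ / ε 0 * ε t) + M₂ * ρ ^ 2 * ε t / (2 * (ε 0) ^ 2)
            + ε t * ‖v‖ + ε t * ‖v‖ - ρ / ε 0 * ε t) * (2 * (ε 0) ^ 2)
            < (-(ρ / ε 0 * (|ε' 0| / ε 0 * ε t))) * (2 * (ε 0) ^ 2) := by
          rw [hl, hr]; exact h5
        exact lt_of_mul_lt_mul_right h6 (by positivity)
      linarith [hkey', hδe, hM2g, hslope, habs, hscaled]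
  have hfin := hbar (Set.mem_Icc.mpr ⟨hτδ, le_rfl⟩)
  rw [hstop] at hfin
  calc ‖x τδ - xhat‖ ≤ ρ / ε 0 * Real.sqrt (δ / ‖v‖) := hfin
  _ = ρ / (ε 0 * Real.sqrt ‖v‖) * Real.sqrt δ := by
      rw [Real.sqrt_div hδ.le]
      ring
end
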